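/- arXiv:2310.18565 — 10 statements merged into one kernel-verified Lean document; each statement's English description precedes it below -/
import Mathlib

section
/- Let B ∈ C^{q×r} be a matrix whose entries all have modulus 1. Then for any x ∈ C^r, ||Bx||_4^4 = 2 ||x||_2^2 ||Bx||_2^2 − q ||x||_4^4 + Σ_1, where Σ_1 = ∑ (∑_{j=1}^q conj(B_{j,k}) B_{j,k'} B_{j,ℓ} conj(B_{j,ℓ'})) conj(x_k) x_{k'} x_ℓ conj(x_{ℓ'}), the outer sum ranging over ordered pairs of distinct indices (k ≠ k') and (ℓ ≠ ℓ') with (k,k') ≠ (ℓ,ℓ'). -/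
/-!
Fix a row `j` and put `u k = B j k * x k`, so that `‖u k‖ = ‖x k‖` and `(B x)_j = s := ∑ k, u k`.
The products `conj (u k) * u k'` sum to `‖s‖²`, and their diagonal part is `‖u‖₂²`; so the
off-diagonal part `D` equals `‖s‖² - ‖u‖₂²`. The sum `Σ₁` for this row runs over the off-diagonal
pairs of off-diagonal pairs, hence equals `|D|² - ∑_{k ≠ k'} ‖u k‖² ‖u k'‖²
= (‖s‖² - ‖u‖₂²)² - (‖u‖₂⁴ - ‖u‖₄⁴)`, which rearranges to the identity for the row.
Summing over the `q` rows gives the theorem.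
-/

open Finset ComplexConjugate

theorem Finset.sum_offDiag_eq_sum_sum_sub {α M : Type*} [DecidableEq α] [AddCommGroup M]
    (s : Finset α) (f : α → α → M) :
    ∑ p ∈ s.offDiag, f p.1 p.2 = ∑ a ∈ s, ∑ b ∈ s, f a b - ∑ a ∈ s, f a a := by
  rw [← sum_product', ← diag_union_offDiag, sum_union (disjoint_diag_offDiag s), sum_diag,
    add_sub_cancel_left]

theorem RCLike.sum_offDiag_conj_mul {𝕜 α : Type*} [RCLike 𝕜] [DecidableEq α]
    (s : Finset α) (g : α → 𝕜) :
    ∑ p ∈ s.offDiag, conj (g p.1) * g p.2 =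
      ((‖∑ a ∈ s, g a‖ ^ 2 - ∑ a ∈ s, ‖g a‖ ^ 2 : ℝ) : 𝕜) := by
  rw [sum_offDiag_eq_sum_sum_sub (f := fun a b => conj (g a) * g b), ← sum_mul_sum, ← map_sum]
  push_cast
  simp only [RCLike.conj_mul]

theorem RCLike.norm_sum_pow_four {𝕜 ι : Type*} [RCLike 𝕜] [Fintype ι] [DecidableEq ι]
    (u : ι → 𝕜) :
    ((‖∑ k, u k‖ ^ 4 : ℝ) : 𝕜) =
      2 * ((∑ k, ‖u k‖ ^ 2 : ℝ) : 𝕜) * ((‖∑ k, u k‖ ^ 2 : ℝ) : 𝕜) - ((∑ k, ‖u k‖ ^ 4 : ℝ) : 𝕜) +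
        ∑ P ∈ univ.offDiag.offDiag, conj (u P.1.1) * u P.1.2 * u P.2.1 * conj (u P.2.2) := by
  set v : ι × ι → 𝕜 := fun p => u p.1 * conj (u p.2) with hv
  have hv_sum : ∑ p ∈ univ.offDiag, v p = ((‖∑ k, u k‖ ^ 2 - ∑ k, ‖u k‖ ^ 2 : ℝ) : 𝕜) := by
    rw [← RCLike.conj_ofReal, ← RCLike.sum_offDiag_conj_mul, map_sum]
    refine sum_congr rfl fun p _ => ?_
    simp only [hv, map_mul, RCLike.conj_conj, mul_comm]
  have hv_norm : ∑ p ∈ univ.offDiag, ‖v p‖ ^ 2 = (∑ k, ‖u k‖ ^ 2) ^ 2 - ∑ k, ‖u k‖ ^ 4 := by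
    simp only [hv, norm_mul, RCLike.norm_conj, mul_pow]
    rw [sum_offDiag_eq_sum_sum_sub (f := fun a b => ‖u a‖ ^ 2 * ‖u b‖ ^ 2), ← sum_mul_sum, sq]
    congr 1
    exact sum_congr rfl fun k _ => by ring
  have hcross : ∑ P ∈ univ.offDiag.offDiag, conj (u P.1.1) * u P.1.2 * u P.2.1 * conj (u P.2.2) =
      ((‖∑ p ∈ univ.offDiag, v p‖ ^ 2 - ∑ p ∈ univ.offDiag, ‖v p‖ ^ 2 : ℝ) : 𝕜) := by
    rw [← RCLike.sum_offDiag_conj_mul]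
    refine sum_congr rfl fun P _ => ?_
    simp only [hv, map_mul, RCLike.conj_conj]
    ring
  rw [hcross, hv_sum, hv_norm, RCLike.norm_ofReal, sq_abs]
  push_cast
  ring

/-- `ℓ₄` expansion of `‖Bx‖₄⁴` for a matrix with unimodular entries. -/
theorem stmt2 (q r : ℕ) (B : Matrix (Fin q) (Fin r) ℂ) (hB : ∀ j k, ‖B j k‖ = 1)
    (x : Fin r → ℂ) :
    ((∑ j, ‖B.mulVec x j‖ ^ 4 : ℝ) : ℂ) =
      2 * ((∑ k, ‖x k‖ ^ 2 : ℝ) : ℂ) * ((∑ j, ‖B.mulVec x j‖ ^ 2 : ℝ) : ℂ) -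
        (q : ℂ) * ((∑ k, ‖x k‖ ^ 4 : ℝ) : ℂ) +
        ∑ P ∈ Finset.univ.filter
            (fun P : (Fin r × Fin r) × (Fin r × Fin r) =>
              P.1.1 ≠ P.1.2 ∧ P.2.1 ≠ P.2.2 ∧ P.1 ≠ P.2),
          (∑ j, (starRingEnd ℂ) (B j P.1.1) * B j P.1.2 * B j P.2.1 *
              (starRingEnd ℂ) (B j P.2.2)) *
            ((starRingEnd ℂ) (x P.1.1) * x P.1.2 * x P.2.1 * (starRingEnd ℂ) (x P.2.2)) := by
  have hrow : ∀ j, ((‖B.mulVec x j‖ ^ 4 : ℝ) : ℂ) =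
      2 * ((∑ k, ‖x k‖ ^ 2 : ℝ) : ℂ) * ((‖B.mulVec x j‖ ^ 2 : ℝ) : ℂ) -
        ((∑ k, ‖x k‖ ^ 4 : ℝ) : ℂ) +
        ∑ P ∈ univ.offDiag.offDiag, conj (B j P.1.1) * B j P.1.2 * B j P.2.1 * conj (B j P.2.2) *
          (conj (x P.1.1) * x P.1.2 * x P.2.1 * conj (x P.2.2)) := by
    intro j
    have hnorm (k) : ‖B j k * x k‖ = ‖x k‖ := by simp [hB]
    have h := RCLike.norm_sum_pow_four fun k => B j k * x k
    simp only [hnorm, map_mul] at h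
    refine h.trans ?_
    congr 1
    exact sum_congr rfl fun P _ => by ring
  have hpairs : univ.filter (fun P : (Fin r × Fin r) × (Fin r × Fin r) =>
      P.1.1 ≠ P.1.2 ∧ P.2.1 ≠ P.2.2 ∧ P.1 ≠ P.2) = univ.offDiag.offDiag := by
    ext P
    simp
  rw [Complex.ofReal_sum, sum_congr rfl fun j _ => hrow j, sum_add_distrib, sum_sub_distrib,
    ← mul_sum, Complex.ofReal_sum, sum_const, card_univ, Fintype.card_fin, hpairs, sum_comm]
  simp only [sum_mul, nsmul_eq_mul, Complex.ofReal_sum]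
end

section
/- For a prime number p ≥ 3, the integers g(k) = 2pk + (k²)_p for k ∈ [0:p−1], where (k²)_p denotes the unique integer t ∈ [0:p−1] with k² ≡ t mod p, form a Golomb ruler: for all ordered pairs (k ≠ k') and (ℓ ≠ ℓ') of indices in [0:p−1] with (k,k') ≠ (ℓ,ℓ'), one has g(k) − g(k') ≠ g(ℓ) − g(ℓ'). -/
/-! The ruler `g k = 2pk + (k²)_p` encodes the pair `(k, k²)`: the coarse part `2pk` and
the residue `(k²)_p` cannot interfere, because a difference of two differences of residues
is less than `2p` in absolute value. So `g k - g k' = g l - g l'` forces both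
`k - k' = l - l'` and `k² - k'² ≡ l² - l'² (mod p)`. Dividing the second by `k - k' ≢ 0`
gives `k + k' ≡ l + l'`, and since `p` is odd, `k ≡ l` and `k' ≡ l'`. -/

lemma Int.eq_and_eq_of_mul_add_eq_mul_add {n a b u v : ℤ} (h : n * a + u = n * b + v)
    (huv : |u - v| < n) : a = b ∧ u = v := by
  have hn : n ≠ 0 := (abs_nonneg _ |>.trans_lt huv).ne'
  have huv' : u = v :=
    sub_eq_zero.mp (Int.eq_zero_of_abs_lt_dvd ⟨b - a, by linear_combination h⟩ huv)
  subst huv'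
  exact ⟨mul_left_cancel₀ hn (add_right_cancel h), rfl⟩

lemma Int.abs_emod_sub_emod_sub_emod_sub_emod_lt {n : ℤ} (hn : 0 < n) (a b c d : ℤ) :
    |(a % n - b % n) - (c % n - d % n)| < 2 * n := by
  have := Int.emod_nonneg a hn.ne'
  have := Int.emod_nonneg b hn.ne'
  have := Int.emod_nonneg c hn.ne'
  have := Int.emod_nonneg d hn.ne'
  have := Int.emod_lt_of_pos a hn
  have := Int.emod_lt_of_pos b hn
  have := Int.emod_lt_of_pos c hn
  have := Int.emod_lt_of_pos d hn
  rw [abs_lt]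
  constructor <;> linarith

lemma eq_and_eq_of_sub_eq_of_sq_sub_sq_eq {R : Type*} [CommRing R] [IsDomain R]
    (h2 : (2 : R) ≠ 0) {x x' y y' : R} (hx : x ≠ x') (hd : x - x' = y - y')
    (hsq : x ^ 2 - x' ^ 2 = y ^ 2 - y' ^ 2) : x = y ∧ x' = y' := by
  have hsum : x + x' = y + y' := by
    refine mul_left_cancel₀ (sub_ne_zero.mpr hx) ?_
    linear_combination hsq - (y + y') * hd
  have hxy : x = y := mul_left_cancel₀ h2 (by linear_combination hd + hsum)
  exact ⟨hxy, by linear_combination hsum - hxy⟩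

lemma ZMod.natCast_eq_natCast_iff_of_lt {n a b : ℕ} (ha : a < n) (hb : b < n) :
    (a : ZMod n) = b ↔ a = b := by
  rw [ZMod.natCast_eq_natCast_iff', Nat.mod_eq_of_lt ha, Nat.mod_eq_of_lt hb]

/-- For a prime `p ≥ 3`, the integers `g k = 2pk + (k² mod p)`, `k ∈ [0 : p-1]`,
form a Golomb ruler. -/
theorem stmt3 (p : ℕ) (hp : p.Prime) (hp3 : 3 ≤ p)
    (g : ℕ → ℤ) (hg : ∀ k, g k = 2 * p * k + (k ^ 2 % p)) :
    ∀ k k' l l' : ℕ, k < p → k' < p → l < p → l' < p →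
      k ≠ k' → l ≠ l' → (k, k') ≠ (l, l') →
      g k - g k' ≠ g l - g l' := by
  intro k k' l l' hk hk' hl hl' hkk' _ hne heq
  have := Fact.mk hp
  simp only [hg] at heq
  have hsplit : (2 * p : ℤ) * (k - k') + (k ^ 2 % p - k' ^ 2 % p)
      = (2 * p : ℤ) * (l - l') + (l ^ 2 % p - l' ^ 2 % p) := by
    linear_combination heq
  obtain ⟨hdiff, hres⟩ := Int.eq_and_eq_of_mul_add_eq_mul_add hsplit
    (Int.abs_emod_sub_emod_sub_emod_sub_emod_lt (by exact_mod_cast hp.pos) _ _ _ _)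
  have hdiffZ : (k : ZMod p) - k' = l - l' := by
    exact_mod_cast congrArg (Int.cast : ℤ → ZMod p) hdiff
  have hsqZ : (k : ZMod p) ^ 2 - k' ^ 2 = l ^ 2 - l' ^ 2 := by
    have := congrArg (Int.cast : ℤ → ZMod p) hres
    simpa only [Int.cast_sub, ZMod.intCast_mod, Int.cast_pow, Int.cast_natCast] using this
  have h2 : (2 : ZMod p) ≠ 0 := Ring.two_ne_zero (by rw [ZMod.ringChar_zmod_n]; omega)
  obtain ⟨hkl, hkl'⟩ := eq_and_eq_of_sub_eq_of_sq_sub_sq_eq h2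
    ((ZMod.natCast_eq_natCast_iff_of_lt hk hk').not.mpr hkk') hdiffZ hsqZ
  exact hne (Prod.ext ((ZMod.natCast_eq_natCast_iff_of_lt hk hl).mp hkl)
    ((ZMod.natCast_eq_natCast_iff_of_lt hk' hl').mp hkl'))
end

section
/- Let p ≥ 3 be prime, m = 6p² − 6p + 1, and let g(k) = 2pk + (k²)_p. Define A'' ∈ C^{m×p} with entries A''_{j,k} = exp(i 2π j g(k) / m) for j ∈ [0:m−1], k ∈ [0:p−1]. Then for every x ∈ C^p, ||A'' x||_2^2 = m ||x||_2^2 and ||A'' x||_4^4 = 2m ||x||_2^4 − m ||x||_4^4. -/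
/-! Write `y_j = ∑ₖ xₖ e(j g(k) / m)`. Orthogonality of the characters `j ↦ e(j d / m)` gives
`∑ⱼ |y_j|² = m ∑ xₖ x̄ₗ` over the pairs with `m ∣ g(k) - g(l)`; applied to `y_j²`, an exponential
sum over pairs with frequencies `g(k) + g(k')`, it gives `∑ⱼ |y_j|⁴` as a sum over the solutions of
`g(k) + g(k') ≡ g(l) + g(l') (mod m)`. All these differences lie in `(-m, m)`, and `g` is a Sidon
set: read in base `2p`, `g(k) + g(k')` determines `k + k'` and `(k²)_p + (k'²)_p`, hence
`k + k'` and `k² + k'²` modulo `p`, which determine `{k, k'}` as `p` is odd. So only the trivial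
solutions `{l, l'} = {k, k'}` survive, each unordered pair `{k, k'}` with `k ≠ k'` counted twice. -/

open Complex Finset

noncomputable def expChar (m : ℕ) (d : ℤ) : ℂ :=
  exp (2 * Real.pi * I * d / m)

namespace expChar

variable {m : ℕ}

lemma add (a b : ℤ) : expChar m (a + b) = expChar m a * expChar m b := by
  rw [expChar, expChar, expChar, ← exp_add]
  push_cast
  ring_nf

lemma conj (d : ℤ) : starRingEnd ℂ (expChar m d) = expChar m (-d) := by
  rw [expChar, expChar, ← exp_conj]
  simp only [map_div₀, map_mul, conj_I, conj_ofReal, map_intCast, map_natCast, map_ofNat]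
  push_cast
  ring_nf

lemma natCast_mul (n : ℕ) (d : ℤ) : expChar m (n * d) = expChar m d ^ n := by
  rw [expChar, expChar, ← exp_nat_mul]
  push_cast
  ring_nf

lemma eq_one_iff (hm : m ≠ 0) (d : ℤ) : expChar m d = 1 ↔ (m : ℤ) ∣ d := by
  have hm' : (m : ℂ) ≠ 0 := Nat.cast_ne_zero.mpr hm
  rw [expChar, exp_eq_one_iff]
  constructor
  · rintro ⟨n, hn⟩
    refine ⟨n, ?_⟩
    field_simp at hn
    exact_mod_cast hn
  · rintro ⟨n, rfl⟩
    exact ⟨n, by push_cast; field_simp⟩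

theorem sum_natCast_mul (hm : m ≠ 0) (d : ℤ) :
    ∑ j : Fin m, expChar m (j * d) = if (m : ℤ) ∣ d then (m : ℂ) else 0 := by
  simp only [natCast_mul]
  rw [Fin.sum_univ_eq_sum_range (expChar m d ^ ·)]
  split_ifs with h
  · simp [(eq_one_iff hm d).mpr h]
  · have hpow : expChar m d ^ m = 1 := by
      rw [← natCast_mul, eq_one_iff hm]
      exact dvd_mul_right _ _
    rw [geom_sum_eq (mt (eq_one_iff hm d).mp h), hpow, sub_self, zero_div]

end expChar

def IsSidonMod {κ : Type*} (m : ℕ) (f : κ → ℤ) : Prop :=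
  ∀ k k' l l', (m : ℤ) ∣ f k + f k' - (f l + f l') → (l = k ∧ l' = k') ∨ (l = k' ∧ l' = k)

theorem IsSidonMod.eq_of_dvd_sub {κ : Type*} {m : ℕ} {f : κ → ℤ} (hf : IsSidonMod m f)
    {a b : κ} (h : (m : ℤ) ∣ f a - f b) : a = b := by
  have h2 : (m : ℤ) ∣ f a + f a - (f b + f b) := by
    rw [show f a + f a - (f b + f b) = 2 * (f a - f b) by ring]
    exact dvd_mul_of_dvd_right h 2
  rcases hf a a b b h2 with ⟨h, -⟩ | ⟨h, -⟩ <;> exact h.symm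

section Orthogonality

variable {κ : Type*} [Fintype κ] {m : ℕ}

theorem sum_norm_sq_sum_expChar (hm : m ≠ 0) (c : κ → ℂ) (f : κ → ℤ) :
    ((∑ j : Fin m, ‖∑ a, c a * expChar m (j * f a)‖ ^ 2 : ℝ) : ℂ)
      = m * ∑ a, ∑ b with (m : ℤ) ∣ f a - f b, c a * starRingEnd ℂ (c b) := by
  have expand (j : Fin m) : (‖∑ a, c a * expChar m (j * f a)‖ ^ 2 : ℂ)
      = ∑ a, ∑ b, c a * starRingEnd ℂ (c b) * expChar m (j * (f a - f b)) := by
    rw [← mul_conj', map_sum, sum_mul_sum]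
    refine sum_congr rfl fun a _ => sum_congr rfl fun b _ => ?_
    rw [map_mul, expChar.conj, mul_sub, sub_eq_add_neg, expChar.add]
    ring
  push_cast
  simp only [expand]
  rw [sum_comm]
  simp only [sum_filter, mul_sum]
  refine sum_congr rfl fun a _ => ?_
  rw [sum_comm]
  refine sum_congr rfl fun b _ => ?_
  rw [← mul_sum, expChar.sum_natCast_mul hm]
  split_ifs <;> ring

theorem sum_norm_sq_sum_expChar_of_injective (hm : m ≠ 0) {f : κ → ℤ}
    (hf : ∀ a b, (m : ℤ) ∣ f a - f b → a = b) (x : κ → ℂ) :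
    ∑ j : Fin m, ‖∑ a, x a * expChar m (j * f a)‖ ^ 2 = m * ∑ a, ‖x a‖ ^ 2 := by
  have hdiag (a : κ) : ({b | (m : ℤ) ∣ f a - f b} : Finset κ) = {a} := by
    ext b
    simp only [mem_filter, mem_univ, true_and, mem_singleton]
    exact ⟨fun h => (hf a b h).symm, fun h => h ▸ by simp⟩
  have := sum_norm_sq_sum_expChar hm x f
  simp only [hdiag, sum_singleton, mul_conj'] at this
  exact_mod_cast this

theorem sum_prod_mul_ite_one_two [DecidableEq κ] (w : κ → ℝ) :
    ∑ q : κ × κ, w q.1 * w q.2 * (if q.1 = q.2 then 1 else 2)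
      = 2 * (∑ a, w a) ^ 2 - ∑ a, w a ^ 2 := by
  have (a b : κ) : w a * w b * (if a = b then 1 else 2)
      = 2 * (w a * w b) - if a = b then w a * w b else 0 := by
    split_ifs <;> ring
  simp only [Fintype.sum_prod_type, this, sum_sub_distrib, ← mul_sum, sum_ite_eq, mem_univ,
    if_true, sq, sum_mul_sum]

theorem IsSidonMod.sum_norm_pow_four_sum_expChar [DecidableEq κ] (hm : m ≠ 0) {f : κ → ℤ}
    (hf : IsSidonMod m f) (x : κ → ℂ) :
    ∑ j : Fin m, ‖∑ a, x a * expChar m (j * f a)‖ ^ 4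
      = 2 * m * (∑ a, ‖x a‖ ^ 2) ^ 2 - m * ∑ a, ‖x a‖ ^ 4 := by
  set F : κ × κ → ℤ := fun q => f q.1 + f q.2
  set c : κ × κ → ℂ := fun q => x q.1 * x q.2
  -- `‖y‖⁴ = ‖y²‖²`, and `y²` is again an exponential sum, over pairs with frequencies `f k + f k'`.
  have hsq (j : Fin m) : ‖∑ a, x a * expChar m (j * f a)‖ ^ 4
      = ‖∑ q, c q * expChar m (j * F q)‖ ^ 2 := by
    rw [show 4 = 2 * 2 by rfl, pow_mul, ← norm_pow, sq (∑ a, _), sum_mul_sum,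
      ← Fintype.sum_prod_type']
    congr 3 with q
    rw [mul_add, expChar.add]
    ring
  have hpair (q : κ × κ) : ({r | (m : ℤ) ∣ F q - F r} : Finset (κ × κ)) = {q, q.swap} := by
    ext r
    simp only [mem_filter, mem_univ, true_and, mem_insert, mem_singleton, Prod.ext_iff,
      Prod.fst_swap, Prod.snd_swap]
    constructor
    · exact hf _ _ _ _
    · rintro (⟨h1, h2⟩ | ⟨h1, h2⟩) <;> simp only [F, h1, h2] <;> exact ⟨0, by ring⟩
  have hinner (q : κ × κ) : ∑ r ∈ {q, q.swap}, c q * starRingEnd ℂ (c r)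
      = ((‖x q.1‖ ^ 2 * ‖x q.2‖ ^ 2 * (if q.1 = q.2 then 1 else 2) : ℝ) : ℂ) := by
    have hswap : c q.swap = c q := mul_comm _ _
    have hnorm : c q * starRingEnd ℂ (c q) = ((‖x q.1‖ ^ 2 * ‖x q.2‖ ^ 2 : ℝ) : ℂ) := by
      rw [mul_conj', norm_mul]
      push_cast
      ring
    by_cases h : q.1 = q.2
    · have : q.swap = q := Prod.ext h.symm h
      rw [this, pair_eq_singleton, sum_singleton, hnorm, if_pos h, mul_one]
    · have hne : q ≠ q.swap := fun e => h (congrArg Prod.fst e)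
      rw [sum_pair hne, hswap, hnorm, if_neg h]
      push_cast
      ring
  have h := sum_norm_sq_sum_expChar hm c F
  simp only [hpair, hinner] at h
  have h' : ∑ j : Fin m, ‖∑ q, c q * expChar m (j * F q)‖ ^ 2
      = m * (2 * (∑ a, ‖x a‖ ^ 2) ^ 2 - ∑ a, (‖x a‖ ^ 2) ^ 2) := by
    rw [← sum_prod_mul_ite_one_two]
    exact_mod_cast h
  simp only [hsq, h', ← pow_mul]
  ring

end Orthogonality

theorem eq_and_eq_or_eq_and_eq_of_add_eq_of_sq_add_sq_eq {F : Type*} [Field F] (h2 : (2 : F) ≠ 0)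
    {a b c d : F} (hs : a + b = c + d) (hq : a ^ 2 + b ^ 2 = c ^ 2 + d ^ 2) :
    (c = a ∧ d = b) ∨ (c = b ∧ d = a) := by
  have hprod : a * b = c * d :=
    mul_left_cancel₀ h2 (by linear_combination (a + b + c + d) * hs - hq)
  have hroots : (c - a) * (c - b) = 0 := by linear_combination (-c) * hs + hprod
  rcases mul_eq_zero.mp hroots with h | h
  · exact .inl ⟨sub_eq_zero.mp h, by linear_combination -hs - h⟩
  · exact .inr ⟨sub_eq_zero.mp h, by linear_combination -hs - h⟩

def golomb (p k : ℕ) : ℕ := 2 * p * k + k ^ 2 % p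

section Golomb

variable {p : ℕ}

theorem golomb_add_golomb_mod (hp : 0 < p) (k k' : ℕ) :
    (golomb p k + golomb p k') % (2 * p) = k ^ 2 % p + k' ^ 2 % p := by
  have := Nat.mod_lt (k ^ 2) hp
  have := Nat.mod_lt (k' ^ 2) hp
  rw [golomb, golomb, add_add_add_comm,
    ← mul_add, Nat.mul_add_mod, Nat.mod_eq_of_lt (by omega)]

theorem golomb_add_golomb_div (hp : 0 < p) (k k' : ℕ) :
    (golomb p k + golomb p k') / (2 * p) = k + k' := by
  have := Nat.mod_lt (k ^ 2) hp
  have := Nat.mod_lt (k' ^ 2) hp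
  rw [golomb, golomb, add_add_add_comm,
    ← mul_add, Nat.mul_add_div (by omega), Nat.div_eq_of_lt (by omega), add_zero]

theorem golomb_add_golomb_lt {k k' : ℕ} (hk : k < p) (hk' : k' < p) :
    golomb p k + golomb p k' < 6 * p ^ 2 - 6 * p + 1 := by
  have := Nat.mod_lt (k ^ 2) (by omega : 0 < p)
  have := Nat.mod_lt (k' ^ 2) (by omega : 0 < p)
  have h6 : 6 * p ≤ 6 * p ^ 2 := by nlinarith
  unfold golomb
  zify [h6] at *
  nlinarith

theorem eq_and_eq_or_eq_and_eq_of_golomb_add_golomb_eq (hp : p.Prime) (hp2 : p ≠ 2) {k k' l l' : ℕ} (hk : k < p) (hk' : k' < p)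
    (hl : l < p) (hl' : l' < p) (h : golomb p k + golomb p k' = golomb p l + golomb p l') :
    (l = k ∧ l' = k') ∨ (l = k' ∧ l' = k) := by
  have := Fact.mk hp
  have hsum : ((k + k' : ℕ) : ZMod p) = (l + l' : ℕ) := by
    rw [← golomb_add_golomb_div hp.pos, h, golomb_add_golomb_div hp.pos]
  have hsq : ((k ^ 2 % p + k' ^ 2 % p : ℕ) : ZMod p) = (l ^ 2 % p + l' ^ 2 % p : ℕ) := by
    rw [← golomb_add_golomb_mod hp.pos, h, golomb_add_golomb_mod hp.pos]
  push_cast [ZMod.natCast_mod] at hsum hsq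
  have h2 : (2 : ZMod p) ≠ 0 := fun h0 => hp2 <|
    (Nat.prime_dvd_prime_iff_eq hp Nat.prime_two).mp ((ZMod.natCast_eq_zero_iff 2 p).mp
      (by exact_mod_cast h0))
  have cast_inj {a b : ℕ} (ha : a < p) (hb : b < p) (hab : (a : ZMod p) = b) : a = b := by
    rwa [ZMod.natCast_eq_natCast_iff', Nat.mod_eq_of_lt ha, Nat.mod_eq_of_lt hb] at hab
  rcases eq_and_eq_or_eq_and_eq_of_add_eq_of_sq_add_sq_eq h2 hsum hsq with ⟨e, e'⟩ | ⟨e, e'⟩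
  · exact .inl ⟨cast_inj hl hk e, cast_inj hl' hk' e'⟩
  · exact .inr ⟨cast_inj hl hk' e, cast_inj hl' hk e'⟩

theorem isSidonMod_golomb (hp : p.Prime) (hp2 : p ≠ 2) :
    IsSidonMod (6 * p ^ 2 - 6 * p + 1) fun k : Fin p => (golomb p k : ℤ) := by
  intro k k' l l' hdvd
  beta_reduce at hdvd
  have hlt := golomb_add_golomb_lt k.isLt k'.isLt
  have hlt' := golomb_add_golomb_lt l.isLt l'.isLt
  have heq := Int.eq_zero_of_abs_lt_dvd hdvd (by rw [abs_lt]; omega)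
  have := eq_and_eq_or_eq_and_eq_of_golomb_add_golomb_eq hp hp2 k.isLt k'.isLt l.isLt l'.isLt (by omega)
  simpa only [Fin.ext_iff] using this

end Golomb

/-- For prime `p ≥ 3`, `m = 6p²-6p+1`, the Golomb-ruler matrix
`A''_{j,k} = exp(2πi j g(k)/m)` with `g k = 2pk + (k² mod p)` satisfies
`‖A''x‖₂² = m ‖x‖₂²` and `‖A''x‖₄⁴ = 2m ‖x‖₂⁴ - m ‖x‖₄⁴`. -/
theorem stmt5 (p : ℕ) (hp : p.Prime) (hp3 : 3 ≤ p) (m : ℕ) (hm : m = 6 * p ^ 2 - 6 * p + 1)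
    (A : Matrix (Fin m) (Fin p) ℂ)
    (hA : ∀ (j : Fin m) (k : Fin p),
      A j k = Complex.exp (2 * (Real.pi : ℂ) * Complex.I *
        ((j : ℕ) * (2 * p * (k : ℕ) + (k : ℕ) ^ 2 % p) : ℕ) / (m : ℕ)))
    (x : Fin p → ℂ) :
    (∑ j, ‖A.mulVec x j‖ ^ 2) = m * ∑ k, ‖x k‖ ^ 2 ∧
    (∑ j, ‖A.mulVec x j‖ ^ 4) = 2 * m * (∑ k, ‖x k‖ ^ 2) ^ 2 - m * ∑ k, ‖x k‖ ^ 4 := by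
  have hm0 : m ≠ 0 := hm ▸ Nat.succ_ne_zero _
  have hSidon : IsSidonMod m fun k : Fin p => (golomb p k : ℤ) :=
    hm ▸ isSidonMod_golomb hp (by omega)
  have hAx (j : Fin m) : A.mulVec x j = ∑ k, x k * expChar m (j * (golomb p k : ℤ)) := by
    simp only [Matrix.mulVec, dotProduct]
    refine sum_congr rfl fun k _ => ?_
    rw [hA, expChar, golomb, mul_comm]
    norm_cast
  simp only [hAx]
  exact ⟨sum_norm_sq_sum_expChar_of_injective hm0 (fun _ _ => hSidon.eq_of_dvd_sub) x,
    hSidon.sum_norm_pow_four_sum_expChar hm0 x⟩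
end

section
/- Let p ≥ 3 be prime, m = 6p² − 6p + 1, and A'' ∈ C^{m×p} with entries A''_{j,k} = exp(i 2π j g(k)/m), where g(k) = 2pk + (k²)_p. Let M ∈ C^{(m+p)×p} be the matrix obtained by stacking (2m)^{−1/4} A'' on top of 2^{−1/4} I_p. Then ||M x||_4 = ||x||_2 for all x ∈ C^p, i.e., M is an isometric embedding from l_2^p(C) into l_4^{m+p}(C). -/
/-!
The rows of `A''` are the values at `j ∈ ℤ/m` of the exponential sum `S(j) = ∑ₖ xₖ e(j g(k) / m)`.
Expanding `|S(j)|⁴ = |S(j)²|²` and summing over `j` (orthogonality of characters of `ℤ/m`) counts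
the solutions of `g(a) + g(b) ≡ g(c) + g(d) (mod m)`. The Erdős–Turán numbers
`g(k) = 2pk + (k² mod p)` form a Sidon set, and `m` exceeds every sum `g(a) + g(b)`, so the only
solutions are the trivial ones `{a, b} = {c, d}`. This gives
`∑ⱼ |S(j)|⁴ = m (2 ‖x‖₂⁴ - ∑ₖ |xₖ|⁴)`, and the identity block contributes exactly the missing
`∑ₖ |xₖ|⁴ / 2`.
-/

open Finset ComplexConjugate

def IsSidon {ι R : Type*} [Add R] (g : ι → R) : Prop :=
  ∀ a b c d, g a + g b = g c + g d → a = c ∧ b = d ∨ a = d ∧ b = c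

theorem IsSidon.add_eq_add_iff {ι R : Type*} [AddCommMagma R] {g : ι → R} (hg : IsSidon g)
    (q r : ι × ι) :
    g q.1 + g q.2 = g r.1 + g r.2 ↔ r = q ∨ r = q.swap := by
  constructor
  · intro h
    rcases hg _ _ _ _ h with ⟨h1, h2⟩ | ⟨h1, h2⟩
    · exact Or.inl (Prod.ext h1.symm h2.symm)
    · exact Or.inr (Prod.ext h2.symm h1.symm)
  · rintro (rfl | rfl)
    · rfl
    · exact add_comm _ _

theorem IsSidon.natCast_zmod {ι : Type*} {g : ι → ℕ} (hg : IsSidon g) {m : ℕ}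
    (hm : ∀ a b, g a + g b < m) : IsSidon fun a => (g a : ZMod m) := by
  intro a b c d h
  refine hg a b c d (Nat.ModEq.eq_of_lt_of_lt ?_ (hm a b) (hm c d))
  exact_mod_cast (ZMod.natCast_eq_natCast_iff _ _ _).1 (by push_cast; exact h)

theorem ZMod.natCast_fin_injective (n : ℕ) :
    Function.Injective fun j : Fin n => ((j : ℕ) : ZMod n) :=
  fun i j hij => Fin.ext <| by
    simpa [ZMod.val_cast_of_lt i.isLt, ZMod.val_cast_of_lt j.isLt] using congrArg ZMod.val hij

theorem ZMod.sum_fin_natCast {n : ℕ} [NeZero n] {M : Type*} [AddCommMonoid M] (f : ZMod n → M) :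
    ∑ j : Fin n, f (j : ℕ) = ∑ u, f u :=
  Function.Bijective.sum_comp
    ((Fintype.bijective_iff_injective_and_card _).2 ⟨ZMod.natCast_fin_injective n, by simp⟩) f

theorem eq_and_eq_or_eq_and_eq_of_add_eq_add_of_sq_add_sq {K : Type*} [CommRing K] [IsDomain K]
    (h2 : (2 : K) ≠ 0) {a b c d : K} (hsum : a + b = c + d) (hsq : a ^ 2 + b ^ 2 = c ^ 2 + d ^ 2) :
    a = c ∧ b = d ∨ a = d ∧ b = c := by
  have hprod : a * b = c * d :=
    mul_left_cancel₀ h2 <| by linear_combination (a + b + c + d) * hsum - hsq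
  have hroots : (a - c) * (a - d) = 0 := by linear_combination a * hsum - hprod
  rcases mul_eq_zero.1 hroots with h | h
  · exact Or.inl ⟨by linear_combination h, by linear_combination hsum - h⟩
  · exact Or.inr ⟨by linear_combination h, by linear_combination hsum - h⟩

def erdosTuran (p k : ℕ) : ℕ := 2 * p * k + k ^ 2 % p

theorem erdosTuran_add_lt {p k : ℕ} (hk : k < p) : erdosTuran p k + p < 2 * p * p := by
  have := Nat.mod_lt (k ^ 2) (hk.trans_le' (Nat.zero_le k))
  unfold erdosTuran
  nlinarith

theorem erdosTuran_add_erdosTuran (p a b : ℕ) :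
    erdosTuran p a + erdosTuran p b = 2 * p * (a + b) + (a ^ 2 % p + b ^ 2 % p) := by
  unfold erdosTuran
  ring

theorem sq_mod_add_sq_mod_lt {p : ℕ} (hp : 0 < p) (a b : ℕ) : a ^ 2 % p + b ^ 2 % p < 2 * p := by
  have := Nat.mod_lt (a ^ 2) hp
  have := Nat.mod_lt (b ^ 2) hp
  omega

theorem erdosTuran_add_erdosTuran_div {p : ℕ} (hp : 0 < p) (a b : ℕ) :
    (erdosTuran p a + erdosTuran p b) / (2 * p) = a + b := by
  rw [erdosTuran_add_erdosTuran, Nat.mul_add_div (by omega),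
    Nat.div_eq_of_lt (sq_mod_add_sq_mod_lt hp a b), add_zero]

theorem erdosTuran_add_erdosTuran_mod {p : ℕ} (hp : 0 < p) (a b : ℕ) :
    (erdosTuran p a + erdosTuran p b) % (2 * p) = a ^ 2 % p + b ^ 2 % p := by
  rw [erdosTuran_add_erdosTuran, Nat.mul_add_mod, Nat.mod_eq_of_lt (sq_mod_add_sq_mod_lt hp a b)]

theorem isSidon_erdosTuran {p : ℕ} (hp : p.Prime) (hp2 : p ≠ 2) :
    IsSidon fun k : Fin p => erdosTuran p k := by
  have : Fact p.Prime := ⟨hp⟩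
  intro a b c d h
  have hsum : (a : ℕ) + b = c + d := by
    rw [← erdosTuran_add_erdosTuran_div hp.pos, h, erdosTuran_add_erdosTuran_div hp.pos]
  have hsq : (a : ℕ) ^ 2 % p + b ^ 2 % p = c ^ 2 % p + d ^ 2 % p := by
    rw [← erdosTuran_add_erdosTuran_mod hp.pos, h, erdosTuran_add_erdosTuran_mod hp.pos]
  have h2 : (2 : ZMod p) ≠ 0 := fun h2 => hp2 <| (Nat.prime_dvd_prime_iff_eq hp Nat.prime_two).1 <|
    (ZMod.natCast_eq_zero_iff 2 p).1 (by exact_mod_cast h2)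
  have hinj := ZMod.natCast_fin_injective p
  rcases eq_and_eq_or_eq_and_eq_of_add_eq_add_of_sq_add_sq h2 (a := (a : ZMod p)) (b := b)
      (c := c) (d := d) (by exact_mod_cast congrArg (Nat.cast : ℕ → ZMod p) hsum)
      (by simpa [ZMod.natCast_mod] using congrArg (Nat.cast : ℕ → ZMod p) hsq) with
    ⟨hac, -⟩ | ⟨had, -⟩
  · obtain rfl := hinj hac
    exact Or.inl ⟨rfl, Fin.ext (by omega)⟩
  · obtain rfl := hinj had
    exact Or.inr ⟨rfl, Fin.ext (by omega)⟩

theorem isSidon_erdosTuran_zmod {p m : ℕ} (hp : p.Prime) (hp2 : p ≠ 2)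
    (hm : 2 * (2 * p * p) ≤ m + 2 * p) : IsSidon fun k : Fin p => (erdosTuran p k : ZMod m) :=
  (isSidon_erdosTuran hp hp2).natCast_zmod fun a b => by
    have := erdosTuran_add_lt a.isLt
    have := erdosTuran_add_lt b.isLt
    omega

theorem sum_sum_ite_eq_or_eq_swap {ι : Type*} [Fintype ι] [DecidableEq ι] (w : ι × ι → ℝ) :
    ∑ q, ∑ r, (if r = q ∨ r = q.swap then w q else 0) = 2 * ∑ q, w q - ∑ a, w (a, a) := by
  have hrow : ∀ q : ι × ι, ∑ r, (if r = q ∨ r = q.swap then w q else 0) =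
      2 * w q - if q.1 = q.2 then w q else 0 := by
    intro q
    have hfilter : ({r | r = q ∨ r = q.swap} : Finset (ι × ι)) = {q, q.swap} := by ext; simp
    rw [← sum_filter, hfilter]
    by_cases hq : q.1 = q.2
    · have hswap : q.swap = q := Prod.ext hq.symm hq
      simp only [hswap, insert_eq_self.2 (mem_singleton_self q), sum_singleton, if_pos hq]
      ring
    · have hswap : q ≠ q.swap := fun h => hq (congrArg Prod.fst h)
      rw [sum_pair hswap, if_neg hq]
      ring
  rw [sum_congr rfl fun q _ => hrow q, sum_sub_distrib, ← mul_sum,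
    Fintype.sum_prod_type fun q => if q.1 = q.2 then w q else 0]
  simp

section AddChar

variable {R 𝕜 : Type*} [CommRing R] [Fintype R] [DecidableEq R] [RCLike 𝕜] {ψ : AddChar R 𝕜}

theorem AddChar.IsPrimitive.sum_norm_sq_sum_mul_apply_mul (hψ : ψ.IsPrimitive) {κ : Type*}
    [Fintype κ] (c : κ → 𝕜) (h : κ → R) :
    ∑ u, ((‖∑ q, c q * ψ (u * h q)‖ ^ 2 : ℝ) : 𝕜) =
      Fintype.card R * ∑ q, ∑ r, if h q = h r then c q * conj (c r) else 0 := by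
  calc ∑ u, ((‖∑ q, c q * ψ (u * h q)‖ ^ 2 : ℝ) : 𝕜)
      = ∑ u, ∑ q, ∑ r, c q * conj (c r) * ψ (u * (h q - h r)) := by
        refine sum_congr rfl fun u _ => ?_
        rw [RCLike.ofReal_pow, ← RCLike.mul_conj, map_sum, sum_mul_sum]
        refine sum_congr rfl fun q _ => sum_congr rfl fun r _ => ?_
        rw [mul_sub, sub_eq_add_neg, AddChar.map_add_eq_mul, AddChar.map_neg_eq_conj,
          map_mul (starRingEnd 𝕜)]
        ring
    _ = ∑ q, ∑ r, c q * conj (c r) * ∑ u, ψ (u * (h q - h r)) := by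
        rw [sum_comm]; simp_rw [mul_sum]; exact sum_congr rfl fun q _ => sum_comm
    _ = _ := by
        simp_rw [AddChar.sum_mulShift _ hψ, sub_eq_zero, mul_sum]
        refine sum_congr rfl fun q _ => sum_congr rfl fun r _ => ?_
        split_ifs <;> ring

theorem IsSidon.sum_norm_sum_mul_apply_mul_pow_four (hψ : ψ.IsPrimitive) {ι : Type*} [Fintype ι]
    [DecidableEq ι] {g : ι → R} (hg : IsSidon g) (x : ι → 𝕜) :
    ∑ u, ‖∑ k, x k * ψ (u * g k)‖ ^ 4 =
      Fintype.card R * (2 * (∑ k, ‖x k‖ ^ 2) ^ 2 - ∑ k, ‖x k‖ ^ 4) := by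
  have hsq : ∀ u, (∑ k, x k * ψ (u * g k)) ^ 2 =
      ∑ q : ι × ι, x q.1 * x q.2 * ψ (u * (g q.1 + g q.2)) := by
    intro u
    rw [sq, sum_mul_sum, ← Fintype.sum_prod_type']
    refine sum_congr rfl fun q _ => ?_
    rw [mul_add, AddChar.map_add_eq_mul]
    ring
  have hpair : ∀ q r : ι × ι, (if g q.1 + g q.2 = g r.1 + g r.2 then
      x q.1 * x q.2 * conj (x r.1 * x r.2) else 0) =
      ((if r = q ∨ r = q.swap then ‖x q.1‖ ^ 2 * ‖x q.2‖ ^ 2 else 0 : ℝ) : 𝕜) := by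
    intro q r
    by_cases h : r = q ∨ r = q.swap
    · rw [if_pos ((hg.add_eq_add_iff q r).2 h), if_pos h]
      push_cast
      rcases h with rfl | rfl <;>
        simp only [Prod.fst_swap, Prod.snd_swap, map_mul, ← RCLike.mul_conj] <;> ring
    · rw [if_neg (mt (hg.add_eq_add_iff q r).1 h), if_neg h, RCLike.ofReal_zero]
  have hparseval := hψ.sum_norm_sq_sum_mul_apply_mul (fun q : ι × ι => x q.1 * x q.2)
    (fun q => g q.1 + g q.2)
  simp_rw [← hsq, norm_pow, ← pow_mul, hpair] at hparseval
  have hreal : ∑ u, ‖∑ k, x k * ψ (u * g k)‖ ^ 4 = Fintype.card R * ∑ q : ι × ι, ∑ r,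
      (if r = q ∨ r = q.swap then ‖x q.1‖ ^ 2 * ‖x q.2‖ ^ 2 else 0) := by
    exact_mod_cast hparseval
  rw [hreal, sum_sum_ite_eq_or_eq_swap, Fintype.sum_prod_type, sq (∑ k, ‖x k‖ ^ 2), sum_mul_sum]
  simp only [← pow_add]

end AddChar

theorem norm_ofReal_rpow_neg_one_div_four_mul_pow_four {a : ℝ} (ha : 0 ≤ a) (z : ℂ) :
    ‖((a ^ (-(1 : ℝ) / 4) : ℝ) : ℂ) * z‖ ^ 4 = a⁻¹ * ‖z‖ ^ 4 := by
  rw [norm_mul, Complex.norm_real, Real.norm_of_nonneg (Real.rpow_nonneg ha _), mul_pow,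
    ← Real.rpow_natCast, ← Real.rpow_mul ha]
  norm_num [Real.rpow_neg_one]

/-- Stacking `(2m)^{-1/4} A''` on top of `2^{-1/4} I_p` gives an isometric embedding
from `ℓ₂^p(ℂ)` into `ℓ₄^{m+p}(ℂ)`. -/
theorem stmt6 (p : ℕ) (hp : p.Prime) (hp3 : 3 ≤ p) (m : ℕ) (hm : m = 6 * p ^ 2 - 6 * p + 1)
    (A : Matrix (Fin m) (Fin p) ℂ)
    (hA : ∀ (j : Fin m) (k : Fin p),
      A j k = Complex.exp (2 * (Real.pi : ℂ) * Complex.I *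
        ((j : ℕ) * (2 * p * (k : ℕ) + (k : ℕ) ^ 2 % p) : ℕ) / (m : ℕ)))
    (M : Matrix (Fin m ⊕ Fin p) (Fin p) ℂ)
    (hM₁ : ∀ (j : Fin m) (k : Fin p),
      M (Sum.inl j) k = (((2 * (m : ℝ)) ^ (-(1 : ℝ) / 4) : ℝ) : ℂ) * A j k)
    (hM₂ : ∀ (i k : Fin p),
      M (Sum.inr i) k = if i = k then (((2 : ℝ) ^ (-(1 : ℝ) / 4) : ℝ) : ℂ) else 0)
    (x : Fin p → ℂ) :
    (∑ j, ‖M.mulVec x j‖ ^ 4) ^ ((1 : ℝ) / 4) = Real.sqrt (∑ k, ‖x k‖ ^ 2) := by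
  have : NeZero m := ⟨by omega⟩
  set S : ZMod m → ℂ := fun u => ∑ k, x k * ZMod.stdAddChar (u * (erdosTuran p k : ZMod m))
  have hrow₁ (j : Fin m) :
      M.mulVec x (Sum.inl j) = (((2 * (m : ℝ)) ^ (-(1 : ℝ) / 4) : ℝ) : ℂ) * S (j : ℕ) := by
    simp only [Matrix.mulVec, dotProduct, hM₁, hA, mul_sum, S]
    refine sum_congr rfl fun k _ => ?_
    rw [← Nat.cast_mul, ZMod.stdAddChar_apply, ZMod.toCircle_natCast, erdosTuran]
    ring
  have hrow₂ (i : Fin p) : M.mulVec x (Sum.inr i) = (((2 : ℝ) ^ (-(1 : ℝ) / 4) : ℝ) : ℂ) * x i := by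
    simp [Matrix.mulVec, dotProduct, hM₂]
  have hsidon : IsSidon fun k : Fin p => (erdosTuran p k : ZMod m) := by
    have : 6 * p ≤ 6 * p ^ 2 := by nlinarith
    have hm' : m + 6 * p = 6 * p ^ 2 + 1 := by omega
    exact isSidon_erdosTuran_zmod hp (by omega) (by nlinarith)
  have henergy := hsidon.sum_norm_sum_mul_apply_mul_pow_four (ZMod.isPrimitive_stdAddChar m) x
  have hsum : ∑ j, ‖M.mulVec x j‖ ^ 4 = (∑ k, ‖x k‖ ^ 2) ^ 2 := by
    simp only [Fintype.sum_sum_type, hrow₁, hrow₂,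
      norm_ofReal_rpow_neg_one_div_four_mul_pow_four (by positivity : (0 : ℝ) ≤ 2 * m),
      norm_ofReal_rpow_neg_one_div_four_mul_pow_four (by positivity : (0 : ℝ) ≤ 2)]
    rw [← mul_sum, ← mul_sum, ZMod.sum_fin_natCast fun u => ‖S u‖ ^ 4, henergy, ZMod.card]
    have : (m : ℝ) ≠ 0 := by exact_mod_cast NeZero.ne m
    field_simp
    ring
  rw [hsum, Real.sqrt_eq_rpow, ← Real.rpow_natCast, ← Real.rpow_mul (by positivity)]
  norm_num
end

section
/- Let A ∈ R^{m×N} have entries A_{j,k} = ±1 and suppose (a) |∑_{j=1}^m A_{j,k}A_{j,k'}| ≤ κ√m for all distinct k, k' and (b) |∑_{j=1}^m A_{j,k}A_{j,k'}A_{j,ℓ}A_{j,ℓ'}| ≤ κ√m for all distinct k, k', ℓ, ℓ'. Then for any δ ∈ (0,1), if m ≥ κ² δ^{−2} s⁴, then for every s-sparse x ∈ R^N, ||Ax||_4^4 ≤ 3(1+δ) m ||x||_2^4. -/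
/-!
Expand `‖Ax‖₄⁴ = ∑_{k,k',l,l'} T(k,k',l,l') x_k x_k' x_l x_l'`, where `T` is the fourth-order
correlation of the columns `k, k', l, l'`. If the four indices split into two equal pairs, the
`±1` entries give `T = m` and the term is a nonnegative product of squares, so these terms
contribute at most `m` times the three pairing sums, i.e. `3m‖x‖₂⁴`. For every other quadruple
either an index repeats, and `A_{jk}² = 1` cancels it down to a two-column correlation (a), or all
four are distinct (b); either way `|T| ≤ |κ|√m`, so these terms contribute at most
`|κ|√m ‖x‖₁⁴ ≤ |κ|√m s² ‖x‖₂⁴ ≤ δ m ‖x‖₂⁴`.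
-/

open Finset Matrix

variable {ι n R : Type*} [Fintype ι]

theorem sum_pow_four [Fintype n] [CommSemiring R] (f : n → R) :
    (∑ k, f k) ^ 4 = ∑ k, ∑ k', ∑ l, ∑ l', f k * f k' * f l * f l' := by
  simp only [← mul_sum, ← sum_mul]
  ring

def quadCorr [CommSemiring R] (A : Matrix ι n R) (k k' l l' : n) : R :=
  ∑ j, A j k * A j k' * A j l * A j l'

theorem sum_mulVec_pow_four [Fintype n] [CommSemiring R] (A : Matrix ι n R) (x : n → R) :
    ∑ j, (A *ᵥ x) j ^ 4 =
      ∑ k, ∑ k', ∑ l, ∑ l', quadCorr A k k' l l' * (x k * x k' * x l * x l') := by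
  simp only [mulVec, dotProduct, sum_pow_four, quadCorr, sum_mul]
  rw [sum_comm]; refine sum_congr rfl fun k _ => ?_
  rw [sum_comm]; refine sum_congr rfl fun k' _ => ?_
  rw [sum_comm]; refine sum_congr rfl fun l _ => ?_
  rw [sum_comm]; exact sum_congr rfl fun l' _ => sum_congr rfl fun j _ => by ring

def IsPaired (k k' l l' : n) : Prop :=
  (k = k' ∧ l = l') ∨ (k = l ∧ k' = l') ∨ (k = l' ∧ k' = l)

section SignMatrix

variable {A : Matrix ι n R}

theorem quadCorr_of_isPaired [CommRing R] (hA : ∀ j k, A j k * A j k = 1) {k k' l l' : n}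
    (h : IsPaired k k' l l') : quadCorr A k k' l l' = Fintype.card ι := by
  suffices hj : ∀ j, A j k * A j k' * A j l * A j l' = 1 by simp [quadCorr, hj]
  intro j
  rcases h with ⟨rfl, rfl⟩ | ⟨rfl, rfl⟩ | ⟨rfl, rfl⟩
  · linear_combination (A j l * A j l) * hA j k + hA j l
  · linear_combination (A j k' * A j k') * hA j k + hA j k'
  · linear_combination (A j k' * A j k') * hA j k + hA j k'

theorem abs_quadCorr_le_of_not_isPaired [CommRing R] [LinearOrder R]
    (hA : ∀ j k, A j k * A j k = 1) {B : R}
    (ha : ∀ k k' : n, k ≠ k' → |∑ j, A j k * A j k'| ≤ B)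
    (hb : ∀ k k' l l' : n, k ≠ k' → k ≠ l → k ≠ l' → k' ≠ l → k' ≠ l' → l ≠ l' →
      |quadCorr A k k' l l'| ≤ B)
    {k k' l l' : n} (h : ¬IsPaired k k' l l') : |quadCorr A k k' l l'| ≤ B := by
  have reduce : ∀ a b c, a ≠ b →
      (∀ j, A j k * A j k' * A j l * A j l' = A j c * A j c * (A j a * A j b)) →
      |quadCorr A k k' l l'| ≤ B := fun a b c hab hj => by
    simpa [quadCorr, hj, hA] using ha a b hab
  simp only [IsPaired, not_or, not_and] at h
  obtain ⟨h₁, h₂, h₃⟩ := h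
  rcases eq_or_ne k k' with rfl | hkk'
  · exact reduce l l' k (h₁ rfl) fun j => by ring
  rcases eq_or_ne k l with rfl | hkl
  · exact reduce k' l' k (h₂ rfl) fun j => by ring
  rcases eq_or_ne k l' with rfl | hkl'
  · exact reduce k' l k (h₃ rfl) fun j => by ring
  rcases eq_or_ne k' l with rfl | hk'l
  · exact reduce k l' k' (fun h => h₃ h rfl) fun j => by ring
  rcases eq_or_ne k' l' with rfl | hk'l'
  · exact reduce k l k' (fun h => h₂ h rfl) fun j => by ring
  rcases eq_or_ne l l' with rfl | hll'
  · exact reduce k k' l hkk' fun j => by ring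
  exact hb k k' l l' hkk' hkl hkl' hk'l hk'l' hll'

end SignMatrix

def pairingCount [DecidableEq n] (k k' l l' : n) : ℕ :=
  (if k = k' ∧ l = l' then 1 else 0) + (if k = l ∧ k' = l' then 1 else 0) +
    (if k = l' ∧ k' = l then 1 else 0)

theorem sum_pairingCount_mul [Fintype n] [DecidableEq n] [CommSemiring R] (x : n → R) :
    ∑ k, ∑ k', ∑ l, ∑ l', (pairingCount k k' l l' : R) * (x k * x k' * x l * x l') =
      3 * (∑ k, x k ^ 2) ^ 2 := by
  simp only [pairingCount, Nat.cast_add, Nat.cast_ite, Nat.cast_one, Nat.cast_zero, add_mul,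
    ite_mul, one_mul, zero_mul]
  simp [sum_add_distrib, ite_and, sq, sum_mul_sum, mul_comm, mul_left_comm]
  ring

section Ordered

variable [CommRing R] [LinearOrder R] [IsStrictOrderedRing R] [DecidableEq n]

theorem quadCorr_mul_le {A : Matrix ι n R} (hA : ∀ j k, A j k * A j k = 1) {B : R} (hB : 0 ≤ B)
    (hT : ∀ k k' l l' : n, ¬IsPaired k k' l l' → |quadCorr A k k' l l'| ≤ B)
    (x : n → R) (k k' l l' : n) :
    quadCorr A k k' l l' * (x k * x k' * x l * x l') ≤
      Fintype.card ι * (pairingCount k k' l l' * (x k * x k' * x l * x l')) +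
        B * (|x k| * |x k'| * |x l| * |x l'|) := by
  have hB' : 0 ≤ B * (|x k| * |x k'| * |x l| * |x l'|) := by positivity
  by_cases h : IsPaired k k' l l'
  · rw [quadCorr_of_isPaired hA h]
    have hp : 0 ≤ x k * x k' * x l * x l' := by
      rcases h with ⟨rfl, rfl⟩ | ⟨rfl, rfl⟩ | ⟨rfl, rfl⟩
      · convert mul_self_nonneg (x k * x l) using 1; ring
      · convert mul_self_nonneg (x k * x k') using 1; ring
      · convert mul_self_nonneg (x k * x k') using 1; ring
    have hc : (1 : R) ≤ pairingCount k k' l l' := by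
      norm_cast
      unfold pairingCount
      rcases h with h | h | h <;> simp only [if_pos h] <;> split_ifs <;> omega
    have hcp := mul_le_mul_of_nonneg_left (le_mul_of_one_le_left hp hc)
      (Nat.cast_nonneg (α := R) (Fintype.card ι))
    linarith
  · have hc : pairingCount k k' l l' = 0 := by
      simp only [IsPaired, not_or] at h
      simp [pairingCount, h]
    calc quadCorr A k k' l l' * (x k * x k' * x l * x l')
        ≤ |quadCorr A k k' l l'| * (|x k| * |x k'| * |x l| * |x l'|) := by
          simpa only [abs_mul] using le_abs_self (quadCorr A k k' l l' * (x k * x k' * x l * x l'))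
      _ ≤ B * (|x k| * |x k'| * |x l| * |x l'|) := by gcongr; exact hT k k' l l' h
      _ = _ := by simp [hc]

theorem sum_mulVec_pow_four_le [Fintype n] {A : Matrix ι n R} (hA : ∀ j k, A j k * A j k = 1) {B : R}
    (hB : 0 ≤ B) (hT : ∀ k k' l l' : n, ¬IsPaired k k' l l' → |quadCorr A k k' l l'| ≤ B)
    (x : n → R) :
    ∑ j, (A *ᵥ x) j ^ 4 ≤ 3 * Fintype.card ι * (∑ k, x k ^ 2) ^ 2 + B * (∑ k, |x k|) ^ 4 := by
  calc ∑ j, (A *ᵥ x) j ^ 4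
      = ∑ k, ∑ k', ∑ l, ∑ l', quadCorr A k k' l l' * (x k * x k' * x l * x l') :=
        sum_mulVec_pow_four A x
    _ ≤ ∑ k, ∑ k', ∑ l, ∑ l', (Fintype.card ι * (pairingCount k k' l l' * (x k * x k' * x l * x l'))
          + B * (|x k| * |x k'| * |x l| * |x l'|)) := by
        gcongr with k _ k' _ l _ l' _
        exact quadCorr_mul_le hA hB hT x k k' l l'
    _ = 3 * Fintype.card ι * (∑ k, x k ^ 2) ^ 2 + B * (∑ k, |x k|) ^ 4 := by
        simp only [sum_add_distrib, ← mul_sum, sum_pairingCount_mul, sum_pow_four]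
        ring

end Ordered

theorem sq_sum_abs_le_of_ncard_le [Fintype n] [CommRing R] [LinearOrder R] [IsStrictOrderedRing R]
    {x : n → R} {s : ℕ} (hx : {k | x k ≠ 0}.ncard ≤ s) :
    (∑ k, |x k|) ^ 2 ≤ s * ∑ k, x k ^ 2 := by
  classical
  set S := univ.filter fun k => x k ≠ 0
  have hS : #S ≤ s := by
    rwa [show {k | x k ≠ 0} = (S : Set n) by ext; simp [S], Set.ncard_coe_finset] at hx
  have hsum : ∑ k ∈ S, |x k| = ∑ k, |x k| :=
    sum_subset (subset_univ S) fun k _ hk => by simp_all [S]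
  calc (∑ k, |x k|) ^ 2 = (∑ k ∈ S, |x k|) ^ 2 := by rw [hsum]
    _ ≤ #S * ∑ k ∈ S, |x k| ^ 2 := sq_sum_le_card_mul_sum_sq
    _ ≤ s * ∑ k, x k ^ 2 := by
        simp only [sq_abs]
        gcongr
        exact subset_univ S

theorem stmt9_general (m N s : ℕ) (κ δ : ℝ) (hδ : δ ∈ Set.Ioo (0 : ℝ) 1)
    (A : Matrix (Fin m) (Fin N) ℝ) (hA : ∀ j k, A j k = 1 ∨ A j k = -1)
    (ha : ∀ k k' : Fin N, k ≠ k' → |∑ j, A j k * A j k'| ≤ κ * Real.sqrt m)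
    (hb : ∀ k k' l l' : Fin N, k ≠ k' → k ≠ l → k ≠ l' → k' ≠ l → k' ≠ l' → l ≠ l' →
      |∑ j, A j k * A j k' * A j l * A j l'| ≤ κ * Real.sqrt m)
    (hm : (m : ℝ) ≥ κ ^ 2 / δ ^ 2 * s ^ 4)
    (x : Fin N → ℝ) (hx : {k | x k ≠ 0}.ncard ≤ s) :
    ∑ j, (A.mulVec x j) ^ 4 ≤ 3 * (1 + δ) * m * (∑ k, x k ^ 2) ^ 2 := by
  have hδ0 : 0 < δ := hδ.1
  have hA' : ∀ j k, A j k * A j k = 1 := fun j k => by rcases hA j k with h | h <;> simp [h]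
  have habs : κ * √m ≤ |κ| * √m := by gcongr; exact le_abs_self κ
  have hT : ∀ k k' l l', ¬IsPaired k k' l l' → |quadCorr A k k' l l'| ≤ |κ| * √m :=
    fun k k' l l' => abs_quadCorr_le_of_not_isPaired hA' (fun k k' h => (ha k k' h).trans habs)
      fun k k' l l' h₁ h₂ h₃ h₄ h₅ h₆ => (hb k k' l l' h₁ h₂ h₃ h₄ h₅ h₆).trans habs
  have hκs : |κ| * s ^ 2 ≤ δ * √m := by
    rw [← div_le_iff₀' hδ0, Real.le_sqrt (by positivity) (by positivity)]
    convert hm using 1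
    rw [div_pow, mul_pow, sq_abs, ← pow_mul]
    ring
  have hsparse := sq_sum_abs_le_of_ncard_le hx
  have hsm : √m * √m = m := Real.mul_self_sqrt (Nat.cast_nonneg m)
  calc ∑ j, (A.mulVec x j) ^ 4
      ≤ 3 * m * (∑ k, x k ^ 2) ^ 2 + |κ| * √m * ((∑ k, |x k|) ^ 2) ^ 2 := by
        simpa [← pow_mul] using sum_mulVec_pow_four_le hA' (by positivity) hT x
    _ ≤ 3 * m * (∑ k, x k ^ 2) ^ 2 + |κ| * √m * (s * ∑ k, x k ^ 2) ^ 2 := by gcongr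
    _ = 3 * m * (∑ k, x k ^ 2) ^ 2 + |κ| * s ^ 2 * (√m * (∑ k, x k ^ 2) ^ 2) := by ring
    _ ≤ 3 * m * (∑ k, x k ^ 2) ^ 2 + δ * √m * (√m * (∑ k, x k ^ 2) ^ 2) := by gcongr
    _ = (3 + δ) * m * (∑ k, x k ^ 2) ^ 2 := by
        linear_combination (δ * (∑ k, x k ^ 2) ^ 2) * hsm
    _ ≤ 3 * (1 + δ) * m * (∑ k, x k ^ 2) ^ 2 := by gcongr; linarith

/-- For a `±1` matrix satisfying conditions (a) and (b), if `m ≥ κ² δ⁻² s⁴` then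
`‖Ax‖₄⁴ ≤ 3(1+δ) m ‖x‖₂⁴` for all `s`-sparse `x`. -/
theorem stmt9 (m N s : ℕ) (κ δ : ℝ) (hκ : 0 < κ) (hδ : δ ∈ Set.Ioo (0 : ℝ) 1)
    (A : Matrix (Fin m) (Fin N) ℝ) (hA : ∀ j k, A j k = 1 ∨ A j k = -1)
    (ha : ∀ k k' : Fin N, k ≠ k' → |∑ j, A j k * A j k'| ≤ κ * Real.sqrt m)
    (hb : ∀ k k' l l' : Fin N, k ≠ k' → k ≠ l → k ≠ l' → k' ≠ l → k' ≠ l' → l ≠ l' →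
      |∑ j, A j k * A j k' * A j l * A j l'| ≤ κ * Real.sqrt m)
    (hm : (m : ℝ) ≥ κ ^ 2 / δ ^ 2 * s ^ 4)
    (x : Fin N → ℝ) (hx : {k | x k ≠ 0}.ncard ≤ s) :
    ∑ j, (A.mulVec x j) ^ 4 ≤ 3 * (1 + δ) * m * (∑ k, x k ^ 2) ^ 2 :=
  stmt9_general m N s κ δ hδ A hA ha hb hm x hx
end

section
/- Let A ∈ R^{m×N} be a random matrix with independent Rademacher (±1 with probability 1/2) entries, let N ≥ 2, and set κ = √(8 ln N). Then with probability at least 2/3 both conditions hold simultaneously: |∑_{j=1}^m A_{j,k}A_{j,k'}| ≤ κ√m for all distinct k, k' ∈ [1:N], and |∑_{j=1}^m A_{j,k}A_{j,k'}A_{j,ℓ}A_{j,ℓ'}| ≤ κ√m for all distinct k, k', ℓ, ℓ' ∈ [1:N]. -/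
/-!
Write `S_s = ∑_j ∏_{i ∈ s} A_{j,i}` for a nonempty set `s` of columns and fix `k ∈ s`.
Flipping the entry in column `k` of one row negates that row's product, so each row contributes
the factor `cosh c` to the moment generating function of `S_s`, which is therefore
`cosh c ^ m ≤ exp (m c² / 2)`. The Chernoff bound with `c = κ / √m` gives
`P(|S_s| > κ √m) ≤ 2 exp (-κ² / 2) = 2 N⁻⁴`, and a union bound over the at most
`N² / 2 + N⁴ / 24 ≤ N⁴ / 6` pairs and quadruples of columns leaves a failure probability of at
most `1 / 3`.
-/

open Finset Real MeasureTheory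
open scoped ENNReal

noncomputable def boolSign (b : Bool) : ℝ := if b then 1 else -1

lemma boolSign_not (b : Bool) : boolSign (!b) = -boolSign b := by
  cases b <;> simp [boolSign]

lemma abs_boolSign (b : Bool) : |boolSign b| = 1 := by
  cases b <;> simp [boolSign]

lemma cosh_mul_prod_boolSign {ι : Type*} (c : ℝ) (s : Finset ι) (r : ι → Bool) :
    cosh (c * ∏ i ∈ s, boolSign (r i)) = cosh c := by
  rw [← cosh_abs, abs_mul, abs_prod]
  simp [abs_boolSign, cosh_abs]

lemma card_filter_le_mul_exp_le {α : Type*} [Fintype α] (f : α → ℝ) (t : ℝ) :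
    #{x | t ≤ f x} * exp t ≤ ∑ x, exp (f x) := by
  calc (#{x | t ≤ f x} : ℝ) * exp t = ∑ x with t ≤ f x, exp t := by simp
    _ ≤ ∑ x with t ≤ f x, exp (f x) :=
        sum_le_sum fun x hx => exp_le_exp.2 (mem_filter.1 hx).2
    _ ≤ ∑ x, exp (f x) :=
        sum_le_sum_of_subset_of_nonneg (subset_univ _) fun _ _ _ => (exp_pos _).le

section SignMatrix

variable {ρ ι : Type*} [Fintype ρ] [DecidableEq ρ] [Fintype ι] [DecidableEq ι]

omit [Fintype ι] in
lemma prod_boolSign_update_not {s : Finset ι} {k : ι} (hk : k ∈ s) (r : ι → Bool) :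
    ∏ i ∈ s, boolSign (Function.update r k (!r k) i) = -∏ i ∈ s, boolSign (r i) := by
  rw [← mul_prod_erase s _ hk, ← mul_prod_erase s _ hk, Function.update_self, boolSign_not,
    neg_mul]
  congr 2
  exact prod_congr rfl fun i hi => by rw [Function.update_of_ne (ne_of_mem_erase hi)]

lemma sum_exp_mul_prod_boolSign {s : Finset ι} {k : ι} (hk : k ∈ s) (c : ℝ) :
    ∑ r : ι → Bool, exp (c * ∏ i ∈ s, boolSign (r i)) = 2 ^ Fintype.card ι * cosh c := by
  have hflip : ∑ r : ι → Bool, exp (-(c * ∏ i ∈ s, boolSign (r i)))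
      = ∑ r : ι → Bool, exp (c * ∏ i ∈ s, boolSign (r i)) :=
    Fintype.sum_bijective (fun r => Function.update r k (!r k))
      (Function.Involutive.bijective fun r => by simp) _ _
      fun r => by rw [prod_boolSign_update_not hk, mul_neg]
  calc ∑ r : ι → Bool, exp (c * ∏ i ∈ s, boolSign (r i))
      = ∑ r : ι → Bool, cosh (c * ∏ i ∈ s, boolSign (r i)) := by
        simp_rw [cosh_eq, ← sum_div, sum_add_distrib, hflip]; ring
    _ = 2 ^ Fintype.card ι * cosh c := by simp [cosh_mul_prod_boolSign]

lemma sum_exp_mul_sum_prod_boolSign {s : Finset ι} {k : ι} (hk : k ∈ s) (c : ℝ) :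
    ∑ ω : ρ → ι → Bool, exp (c * ∑ j, ∏ i ∈ s, boolSign (ω j i))
      = (2 ^ Fintype.card ι * cosh c) ^ Fintype.card ρ := by
  simp_rw [mul_sum, exp_sum]
  rw [← Fintype.prod_sum fun (_ : ρ) (r : ι → Bool) => exp (c * ∏ i ∈ s, boolSign (r i))]
  simp [sum_exp_mul_prod_boolSign hk]

lemma card_le_mul_sum_prod_boolSign_le {s : Finset ι} {k : ι} (hk : k ∈ s) (c t : ℝ) :
    (#{ω : ρ → ι → Bool | t ≤ c * ∑ j, ∏ i ∈ s, boolSign (ω j i)} : ℝ)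
      ≤ exp (Fintype.card ρ * c ^ 2 / 2 - t) * Fintype.card (ρ → ι → Bool) := by
  set m := Fintype.card ρ
  set n := Fintype.card ι
  have hmarkov :=
    card_filter_le_mul_exp_le (fun ω : ρ → ι → Bool => c * ∑ j, ∏ i ∈ s, boolSign (ω j i)) t
  rw [sum_exp_mul_sum_prod_boolSign hk] at hmarkov
  have hmgf : (2 ^ n * cosh c) ^ m ≤ exp (m * c ^ 2 / 2) * Fintype.card (ρ → ι → Bool) :=
    calc (2 ^ n * cosh c) ^ m ≤ (2 ^ n * exp (c ^ 2 / 2)) ^ m := by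
          gcongr; exact cosh_le_exp_half_sq c
      _ = exp (m * c ^ 2 / 2) * Fintype.card (ρ → ι → Bool) := by
          simp [m, n, mul_pow, ← exp_nat_mul, mul_div_assoc, mul_comm]
  rw [sub_eq_add_neg, exp_add, exp_neg, mul_right_comm, ← div_eq_mul_inv,
    le_div_iff₀ (exp_pos _)]
  exact hmarkov.trans hmgf

lemma card_lt_abs_sum_prod_boolSign_le {s : Finset ι} (hs : s.Nonempty) {κ : ℝ} (hκ : 0 ≤ κ) :
    (#{ω : ρ → ι → Bool | κ * √(Fintype.card ρ) < |∑ j, ∏ i ∈ s, boolSign (ω j i)|} : ℝ)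
      ≤ 2 * exp (-(κ ^ 2 / 2)) * Fintype.card (ρ → ι → Bool) := by
  obtain ⟨k, hk⟩ := hs
  set m := Fintype.card ρ
  set S : (ρ → ι → Bool) → ℝ := fun ω => ∑ j, ∏ i ∈ s, boolSign (ω j i)
  rcases Nat.eq_zero_or_pos m with hm | hm
  · have : IsEmpty ρ := Fintype.card_eq_zero_iff.1 hm
    simp [hm, (exp_pos _).le]
  have hm' : (0 : ℝ) < m := Nat.cast_pos.2 hm
  set c := κ / √m
  have hc : 0 ≤ c := by positivity
  have hcκ : c * (κ * √m) = κ ^ 2 := by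
    rw [div_mul_eq_mul_div, mul_div_assoc, mul_div_cancel_right₀ _ (sqrt_pos.2 hm').ne', sq]
  have hexp : exp (m * c ^ 2 / 2 - κ ^ 2) = exp (-(κ ^ 2 / 2)) := by
    rw [div_pow, sq_sqrt hm'.le]; field_simp; ring_nf
  have hsplit : ({ω | κ * √m < |S ω|} : Finset (ρ → ι → Bool))
      ⊆ ({ω | κ ^ 2 ≤ c * S ω} : Finset _) ∪ ({ω | κ ^ 2 ≤ -c * S ω} : Finset _) := by
    intro ω hω
    simp only [mem_filter, mem_univ, true_and, mem_union] at hω ⊢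
    rcases lt_abs.1 hω with h | h
    · exact Or.inl (hcκ ▸ mul_le_mul_of_nonneg_left h.le hc)
    · exact Or.inr (by rw [neg_mul, ← mul_neg]; exact hcκ ▸ mul_le_mul_of_nonneg_left h.le hc)
  have hpos := card_le_mul_sum_prod_boolSign_le (ρ := ρ) hk c (κ ^ 2)
  have hneg := card_le_mul_sum_prod_boolSign_le (ρ := ρ) hk (-c) (κ ^ 2)
  rw [neg_sq, hexp] at hneg
  rw [hexp] at hpos
  calc (#{ω | κ * √m < |S ω|} : ℝ)
      ≤ #{ω | κ ^ 2 ≤ c * S ω} + #{ω | κ ^ 2 ≤ -c * S ω} := by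
        exact_mod_cast (card_le_card hsplit).trans (card_union_le _ _)
    _ ≤ 2 * exp (-(κ ^ 2 / 2)) * Fintype.card (ρ → ι → Bool) := by linarith

variable (ι) in
def pairsAndQuadruples : Finset (Finset ι) := univ.powersetCard 2 ∪ univ.powersetCard 4

lemma card_pairsAndQuadruples_le (hι : 2 ≤ Fintype.card ι) :
    (#(pairsAndQuadruples ι) : ℝ) ≤ Fintype.card ι ^ 4 / 6 := by
  set n := Fintype.card ι
  have hunion := card_union_le (univ.powersetCard 2 : Finset (Finset ι)) (univ.powersetCard 4)
  rw [card_powersetCard, card_powersetCard, card_univ] at hunion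
  have h2 := Nat.choose_le_pow_div (α := ℝ) 2 n
  have h4 := Nat.choose_le_pow_div (α := ℝ) 4 n
  norm_num [Nat.factorial] at h2 h4
  have h2n : (2 : ℝ) ≤ n := by exact_mod_cast hι
  have hn : (4 : ℝ) ≤ n ^ 2 := by nlinarith
  have hn2 : (n : ℝ) ^ 2 * 4 ≤ n ^ 4 := by
    nlinarith [mul_le_mul_of_nonneg_left hn (sq_nonneg (n : ℝ))]
  calc (#(pairsAndQuadruples ι) : ℝ) ≤ (n.choose 2 + n.choose 4 : ℝ) := by exact_mod_cast hunion
    _ ≤ n ^ 4 / 6 := by linarith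

lemma nonempty_of_mem_pairsAndQuadruples {s : Finset ι} (hs : s ∈ pairsAndQuadruples ι) :
    s.Nonempty := by
  rcases mem_union.1 hs with h | h <;>
    exact card_pos.1 (by rw [(mem_powersetCard.1 h).2]; norm_num)

variable (ρ ι) in
noncomputable def badSignMatrices (t : ℝ) : Finset (ρ → ι → Bool) :=
  (pairsAndQuadruples ι).biUnion fun s => {ω | t < |∑ j, ∏ i ∈ s, boolSign (ω j i)|}

lemma card_badSignMatrices_le (hι : 2 ≤ Fintype.card ι) {κ : ℝ}
    (hκ : κ = √(8 * log (Fintype.card ι))) :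
    3 * #(badSignMatrices ρ ι (κ * √(Fintype.card ρ))) ≤ Fintype.card (ρ → ι → Bool) := by
  set n := Fintype.card ι
  set B := badSignMatrices ρ ι (κ * √(Fintype.card ρ))
  set card := Fintype.card (ρ → ι → Bool)
  have hn : (0 : ℝ) < n := by positivity
  have hκ0 : 0 ≤ κ := hκ ▸ sqrt_nonneg _
  have hexp : exp (-(κ ^ 2 / 2)) = ((n : ℝ) ^ 4)⁻¹ := by
    rw [hκ, sq_sqrt (by positivity), show -(8 * log n / 2) = -((4 : ℕ) * log n) by push_cast; ring,
      exp_neg, exp_nat_mul, exp_log hn]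
  suffices (#B : ℝ) ≤ card / 3 by exact_mod_cast (by linarith : (3 * #B : ℝ) ≤ card)
  calc (#B : ℝ)
      ≤ ∑ s ∈ pairsAndQuadruples ι,
          (#{ω : ρ → ι → Bool | κ * √(Fintype.card ρ) < |∑ j, ∏ i ∈ s, boolSign (ω j i)|} : ℝ) :=
        (Nat.cast_le.2 card_biUnion_le).trans_eq (Nat.cast_sum _ _)
    _ ≤ #(pairsAndQuadruples ι) * (2 * exp (-(κ ^ 2 / 2)) * card) := by
        rw [← nsmul_eq_mul]
        exact sum_le_card_nsmul _ _ _ fun s hs =>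
          card_lt_abs_sum_prod_boolSign_le (nonempty_of_mem_pairsAndQuadruples hs) hκ0
    _ ≤ n ^ 4 / 6 * (2 * ((n : ℝ) ^ 4)⁻¹ * card) := by
        rw [hexp]; gcongr; exact card_pairsAndQuadruples_le hι
    _ = card / 3 := by field_simp; ring

lemma abs_sum_pair_le_and_abs_sum_quadruple_le_of_notMem_badSignMatrices {ω : ρ → ι → Bool}
    {t : ℝ} (hω : ω ∉ badSignMatrices ρ ι t) :
    (∀ k k' : ι, k ≠ k' → |∑ j, boolSign (ω j k) * boolSign (ω j k')| ≤ t) ∧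
      (∀ k k' l l' : ι, k ≠ k' → k ≠ l → k ≠ l' → k' ≠ l → k' ≠ l' → l ≠ l' →
        |∑ j, boolSign (ω j k) * boolSign (ω j k') * boolSign (ω j l) * boolSign (ω j l')|
          ≤ t) := by
  have h : ∀ s ∈ pairsAndQuadruples ι, |∑ j, ∏ i ∈ s, boolSign (ω j i)| ≤ t := fun s hs =>
    not_lt.1 fun hlt => hω (mem_biUnion.2 ⟨s, hs, mem_filter.2 ⟨mem_univ _, hlt⟩⟩)
  refine ⟨fun k k' hkk' => ?_, fun k k' l l' h1 h2 h3 h4 h5 h6 => ?_⟩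
  · simpa [prod_pair hkk'] using
      h {k, k'} (mem_union_left _ (mem_powersetCard.2 ⟨subset_univ _, card_pair hkk'⟩))
  · have hk : k ∉ ({k', l, l'} : Finset ι) := by simp [h1, h2, h3]
    have hk' : k' ∉ ({l, l'} : Finset ι) := by simp [h4, h5]
    have hcard : #({k, k', l, l'} : Finset ι) = 4 := by
      rw [card_insert_of_notMem hk, card_insert_of_notMem hk', card_pair h6]
    simpa [prod_insert hk, prod_insert hk', prod_pair h6, mul_assoc] using
      h _ (mem_union_right _ (mem_powersetCard.2 ⟨subset_univ _, hcard⟩))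

end SignMatrix

lemma one_sub_inv_le_toMeasure_uniformOfFintype {α : Type*} [Fintype α] [Nonempty α]
    [MeasurableSpace α] [MeasurableSingletonClass α] {S : Set α} {B : Finset α}
    (hS : ∀ x ∉ B, x ∈ S) {q : ℕ} (hB : q * #B ≤ Fintype.card α) :
    1 - (q : ℝ≥0∞)⁻¹ ≤ (PMF.uniformOfFintype α).toMeasure S := by
  have hμB : (PMF.uniformOfFintype α).toMeasure B ≤ (q : ℝ≥0∞)⁻¹ := by
    rcases q.eq_zero_or_pos with rfl | hq
    · simp
    rw [PMF.toMeasure_uniformOfFintype_apply _ B.measurableSet]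
    simp only [coe_sort_coe, Fintype.card_coe]
    rw [ENNReal.div_le_iff (by simp) (by simp), ← ENNReal.div_eq_inv_mul,
      ENNReal.le_div_iff_mul_le (by simp [hq.ne']) (by simp)]
    exact_mod_cast (mul_comm #B q).trans_le hB
  calc 1 - (q : ℝ≥0∞)⁻¹ ≤ 1 - (PMF.uniformOfFintype α).toMeasure B :=
        tsub_le_tsub_left hμB 1
    _ = (PMF.uniformOfFintype α).toMeasure (↑B)ᶜ :=
        (prob_compl_eq_one_sub B.measurableSet).symm
    _ ≤ (PMF.uniformOfFintype α).toMeasure S := measure_mono fun x hx => hS x hx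

/-- A random `m × N` Rademacher matrix satisfies conditions (a) and (b) with
`κ = √(8 ln N)` with probability at least `2/3`. -/
theorem stmt11 (m N : ℕ) (hN : 2 ≤ N) (κ : ℝ) (hκ : κ = Real.sqrt (8 * Real.log N)) :
    (2 / 3 : ENNReal) ≤
      (PMF.uniformOfFintype (Fin m → Fin N → Bool)).toMeasure
        {ω | (∀ k k' : Fin N, k ≠ k' →
            |∑ j, (if ω j k then (1 : ℝ) else -1) * (if ω j k' then (1 : ℝ) else -1)|
              ≤ κ * Real.sqrt m) ∧
          (∀ k k' l l' : Fin N, k ≠ k' → k ≠ l → k ≠ l' → k' ≠ l → k' ≠ l' → l ≠ l' →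
            |∑ j, (if ω j k then (1 : ℝ) else -1) * (if ω j k' then (1 : ℝ) else -1) *
                (if ω j l then (1 : ℝ) else -1) * (if ω j l' then (1 : ℝ) else -1)|
              ≤ κ * Real.sqrt m)} := by
  have htwo_thirds : (2 / 3 : ℝ≥0∞) = 1 - ((3 : ℕ) : ℝ≥0∞)⁻¹ := by
    refine (ENNReal.sub_eq_of_eq_add (by simp) ?_).symm
    rw [Nat.cast_ofNat, div_eq_mul_inv, ← add_one_mul, two_add_one_eq_three,
      ENNReal.mul_inv_cancel] <;> norm_num
  rw [htwo_thirds]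
  refine one_sub_inv_le_toMeasure_uniformOfFintype
    (B := badSignMatrices (Fin m) (Fin N) (κ * √m))
    (fun ω hω => abs_sum_pair_le_and_abs_sum_quadruple_le_of_notMem_badSignMatrices hω) ?_
  simpa using card_badSignMatrices_le (ρ := Fin m) (ι := Fin N)
    (by rwa [Fintype.card_fin]) (by rwa [Fintype.card_fin])
end

section
/- Let A ∈ K^{m×N} (K = R or C) be a matrix all of whose entries have modulus 1, and suppose there is a constant C > 0 such that ||Ax||_4^4 ≤ C m ||x||_2^4 for all s-sparse x ∈ K^N, where s ≤ N. Then m ≥ C^{−1} s². -/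
/-!
Test the hypothesis on the `s`-sparse vector `x` that is the conjugate of row `i` of `A`
on a set `S` of `s` columns and zero elsewhere. Unimodularity gives `‖x‖₂² = s` and
`(A x)ᵢ = ∑_{k ∈ S} |A i k|² = s`, so `s⁴ ≤ ‖A x‖₄⁴ ≤ C m s²`, i.e. `s² ≤ C m`.
-/

open ComplexConjugate

namespace Matrix

variable {𝕜 ι κ : Type*} [RCLike 𝕜] [Fintype κ]

noncomputable def conjRowOn (A : Matrix ι κ 𝕜) (i : ι) (S : Finset κ) : κ → 𝕜 :=
  (S : Set κ).indicator fun k => conj (A i k)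

variable (A : Matrix ι κ 𝕜) (i : ι) (S : Finset κ)

theorem ncard_support_conjRowOn_le : {k | A.conjRowOn i S k ≠ 0}.ncard ≤ S.card := by
  rw [← Set.ncard_coe_finset]
  exact Set.ncard_le_ncard (fun k hk => by_contra fun hkS => hk (Set.indicator_of_notMem hkS _))

variable {A}

theorem sum_norm_sq_conjRowOn (hA : ∀ j k, ‖A j k‖ = 1) :
    ∑ k, ‖A.conjRowOn i S k‖ ^ 2 = S.card := by
  classical
  simp [conjRowOn, Set.indicator_apply, apply_ite (fun z : 𝕜 => ‖z‖ ^ 2), hA]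

theorem mulVec_conjRowOn_self (hA : ∀ j k, ‖A j k‖ = 1) :
    (A *ᵥ A.conjRowOn i S) i = S.card := by
  classical
  simp [mulVec, dotProduct, conjRowOn, Set.indicator_apply, RCLike.mul_conj, hA]

end Matrix

theorem inv_mul_le_of_mul_self_le {a C m : ℝ} (ha : 0 ≤ a) (hm : 0 ≤ m)
    (h : a * a ≤ C * m * a) : C⁻¹ * a ≤ m := by
  rcases ha.eq_or_lt with rfl | ha
  · simpa using hm
  have hle : a ≤ C * m := le_of_mul_le_mul_right h ha
  rcases le_or_gt C 0 with hC | hC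
  · exact (mul_nonpos_of_nonpos_of_nonneg (inv_nonpos.2 hC) ha.le).trans hm
  · rwa [inv_mul_le_iff₀ hC]

theorem stmt12_general (𝕜 : Type) [RCLike 𝕜] (m N s : ℕ) (hm : 1 ≤ m) (hs : s ≤ N)
    (C : ℝ)
    (A : Matrix (Fin m) (Fin N) 𝕜) (hA : ∀ j k, ‖A j k‖ = 1)
    (h : ∀ x : Fin N → 𝕜, {k | x k ≠ 0}.ncard ≤ s →
      ∑ j, ‖A.mulVec x j‖ ^ 4 ≤ C * m * (∑ k, ‖x k‖ ^ 2) ^ 2) :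
    (m : ℝ) ≥ C⁻¹ * s ^ 2 := by
  obtain ⟨S, -, hS⟩ :=
    Finset.exists_subset_card_eq (s := (Finset.univ : Finset (Fin N))) (by simpa)
  let i : Fin m := ⟨0, hm⟩
  set x := A.conjRowOn i S
  have hx := h x (hS ▸ Matrix.ncard_support_conjRowOn_le A i S)
  rw [Matrix.sum_norm_sq_conjRowOn i S hA, hS] at hx
  have hrow : ((s : ℝ) ^ 2) ^ 2 ≤ ∑ j, ‖A.mulVec x j‖ ^ 4 := by
    calc ((s : ℝ) ^ 2) ^ 2 = ‖A.mulVec x i‖ ^ 4 := by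
          rw [Matrix.mulVec_conjRowOn_self i S hA, hS, RCLike.norm_natCast]; ring
      _ ≤ _ := Finset.single_le_sum (f := fun j => ‖A.mulVec x j‖ ^ 4)
          (fun j _ => by positivity) (Finset.mem_univ i)
  exact inv_mul_le_of_mul_self_le (by positivity) (by positivity)
    (by nlinarith [hrow.trans hx])

/-- For a matrix with unimodular entries, if `‖Ax‖₄⁴ ≤ C m ‖x‖₂⁴` for all `s`-sparse
`x`, then `m ≥ C⁻¹ s²`. -/
theorem stmt12 (𝕜 : Type) [RCLike 𝕜] (m N s : ℕ) (hm : 1 ≤ m) (hs : s ≤ N)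
    (C : ℝ) (hC : 0 < C)
    (A : Matrix (Fin m) (Fin N) 𝕜) (hA : ∀ j k, ‖A j k‖ = 1)
    (h : ∀ x : Fin N → 𝕜, {k | x k ≠ 0}.ncard ≤ s →
      ∑ j, ‖A.mulVec x j‖ ^ 4 ≤ C * m * (∑ k, ‖x k‖ ^ 2) ^ 2) :
    (m : ℝ) ≥ C⁻¹ * s ^ 2 :=
  stmt12_general 𝕜 m N s hm hs C A hA h
end

section
/- Suppose there exist unit vectors x_1, ..., x_N in l_2^n(K) and weights τ_1, ..., τ_N ≥ 0 summing to 1 such that ||∑_{i=1}^N τ_i ⊗^k(x_i ⊗ conj(x_i)) − D||_2 ≤ ε, where D = ∫_S ⊗^k(y ⊗ conj(y)) dσ(y) and δ = ∫_S |⟨x,y⟩|^{2k} dσ(y) for any unit x. Then the matrix A ∈ K^{N×n} with rows a_i^* where a_i = (τ_i/δ)^{1/(2k)} x_i satisfies (1 − ε/δ) ||x||_2^{2k} ≤ ||Ax||_{2k}^{2k} ≤ (1 + ε/δ) ||x||_2^{2k} for all x ∈ K^n. -/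
/-! Pairing the deviation tensor `Δ = ∑ τᵢ ⊗^k(xᵢ ⊗ x̄ᵢ) − D` with `⊗^k(z ⊗ z̄)` gives
`∑ τᵢ |⟨xᵢ, z⟩|^{2k} − δ‖z‖^{2k}`: the tensor pairing of two such rank-one powers is
`|⟨u, v⟩|^{2k}`, and integrating this over `σ` gives `δ‖z‖^{2k}` by homogeneity. Cauchy–Schwarz
bounds the pairing by `‖Δ‖ ‖z‖^{2k} ≤ ε‖z‖^{2k}`, and `∑ᵢ |⟨aᵢ, z⟩|^{2k}` is exactly
`δ⁻¹ ∑ τᵢ |⟨xᵢ, z⟩|^{2k}`. -/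

open MeasureTheory

/-- The `k`-fold tensor power of the rank-one tensor `x ⊗ conj x`. -/
noncomputable def tensPow {𝕜 : Type} [RCLike 𝕜] (n k : ℕ)
    (x : EuclideanSpace 𝕜 (Fin n)) : (Fin k → Fin n × Fin n) → 𝕜 :=
  fun f => ∏ t, x ((f t).1) * (starRingEnd 𝕜) (x ((f t).2))

/-- The standard inner product on the tensor space. -/
noncomputable def tensInner {𝕜 : Type} [RCLike 𝕜] (n k : ℕ)
    (S T : (Fin k → Fin n × Fin n) → 𝕜) : 𝕜 :=
  ∑ f, (starRingEnd 𝕜) (S f) * T f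

open Finset

section Tensor

variable {𝕜 : Type} [RCLike 𝕜] {n k : ℕ}

lemma tensInner_eq_inner (S T : (Fin k → Fin n × Fin n) → 𝕜) :
    tensInner n k S T = inner 𝕜 (WithLp.toLp 2 S) (WithLp.toLp 2 T) := by
  simp only [tensInner, PiLp.inner_apply, RCLike.inner_apply, mul_comm]

lemma norm_tensInner_le (S T : (Fin k → Fin n × Fin n) → 𝕜) :
    ‖tensInner n k S T‖ ≤
      √(RCLike.re (tensInner n k S S)) * √(RCLike.re (tensInner n k T T)) := by
  simp only [tensInner_eq_inner, ← norm_eq_sqrt_re_inner]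
  exact norm_inner_le_norm _ _

lemma tensInner_sub_left (S S' T : (Fin k → Fin n × Fin n) → 𝕜) :
    tensInner n k (fun f => S f - S' f) T = tensInner n k S T - tensInner n k S' T := by
  simp only [tensInner, map_sub, sub_mul, sum_sub_distrib]

lemma tensInner_tensPow (u v : EuclideanSpace 𝕜 (Fin n)) :
    tensInner n k (tensPow n k u) (tensPow n k v) = ((‖inner 𝕜 u v‖ ^ (2 * k) : ℝ) : 𝕜) := by
  set g : Fin n × Fin n → 𝕜 := fun p =>
    (starRingEnd 𝕜 (u p.1) * v p.1) * (u p.2 * starRingEnd 𝕜 (v p.2))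
  have hterm : ∀ f : Fin k → Fin n × Fin n,
      starRingEnd 𝕜 (tensPow n k u f) * tensPow n k v f = ∏ t, g (f t) := by
    intro f
    simp only [tensPow, g, map_prod, map_mul, RCLike.conj_conj, ← prod_mul_distrib]
    exact prod_congr rfl fun _ _ => by ring
  have hg : ∑ p, g p = inner 𝕜 u v * starRingEnd 𝕜 (inner 𝕜 u v) := by
    simp only [g, Fintype.sum_prod_type, PiLp.inner_apply, RCLike.inner_apply, map_sum,
      map_mul, RCLike.conj_conj, sum_mul_sum]
    exact sum_congr rfl fun _ _ => sum_congr rfl fun _ _ => by ring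
  rw [tensInner, sum_congr rfl fun f _ => hterm f, ← Fintype.sum_pow, hg, RCLike.mul_conj,
    ← pow_mul]
  norm_cast

lemma norm_tensInner_tensPow_le {S : (Fin k → Fin n × Fin n) → 𝕜} {ε : ℝ} (hε : 0 ≤ ε)
    (hS : RCLike.re (tensInner n k S S) ≤ ε ^ 2) (z : EuclideanSpace 𝕜 (Fin n)) :
    ‖tensInner n k S (tensPow n k z)‖ ≤ ε * ‖z‖ ^ (2 * k) := by
  have hself : RCLike.re (tensInner n k (tensPow n k z) (tensPow n k z)) = (‖z‖ ^ (2 * k)) ^ 2 := by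
    rw [tensInner_tensPow, RCLike.ofReal_re, inner_self_eq_norm_sq_to_K, norm_pow,
      RCLike.norm_ofReal, abs_norm, ← pow_mul, ← pow_mul, mul_comm]
  calc ‖tensInner n k S (tensPow n k z)‖
      ≤ √(RCLike.re (tensInner n k S S)) * ‖z‖ ^ (2 * k) := by
        simpa only [hself, Real.sqrt_sq (by positivity : (0 : ℝ) ≤ ‖z‖ ^ (2 * k))]
          using norm_tensInner_le S (tensPow n k z)
    _ ≤ ε * ‖z‖ ^ (2 * k) := by
        gcongr
        exact Real.sqrt_le_iff.2 ⟨hε, hS⟩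

lemma tensInner_sum_smul_tensPow_left {ι : Type*} [Fintype ι] (τ : ι → ℝ)
    (x : ι → EuclideanSpace 𝕜 (Fin n)) (z : EuclideanSpace 𝕜 (Fin n)) :
    tensInner n k (fun f => ∑ i, (τ i : 𝕜) * tensPow n k (x i) f) (tensPow n k z) =
      ((∑ i, τ i * ‖inner 𝕜 (x i) z‖ ^ (2 * k) : ℝ) : 𝕜) := by
  have h : tensInner n k (fun f => ∑ i, (τ i : 𝕜) * tensPow n k (x i) f) (tensPow n k z) =
      ∑ i, (τ i : 𝕜) * tensInner n k (tensPow n k (x i)) (tensPow n k z) := by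
    simp only [tensInner, map_sum, map_mul, RCLike.conj_ofReal, sum_mul, mul_sum, mul_assoc]
    exact sum_comm
  simp only [h, tensInner_tensPow]
  push_cast
  rfl

lemma norm_tensPow_le (y : EuclideanSpace 𝕜 (Fin n)) (f : Fin k → Fin n × Fin n) :
    ‖tensPow n k y f‖ ≤ ‖y‖ ^ (2 * k) := by
  rw [tensPow, norm_prod, pow_mul, ← Fin.prod_const]
  refine prod_le_prod (fun _ _ => norm_nonneg _) fun t _ => ?_
  rw [norm_mul, RCLike.norm_conj, sq]
  exact mul_le_mul (PiLp.norm_apply_le y _) (PiLp.norm_apply_le y _) (norm_nonneg _)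
    (norm_nonneg _)

lemma continuous_tensPow (f : Fin k → Fin n × Fin n) :
    Continuous fun y : EuclideanSpace 𝕜 (Fin n) => tensPow n k y f := by
  have hcoord (i : Fin n) : Continuous fun y : EuclideanSpace 𝕜 (Fin n) => y i :=
    (EuclideanSpace.proj i).continuous
  exact continuous_finsetProd _ fun t _ =>
    (hcoord _).mul (RCLike.continuous_conj.comp (hcoord _))

end Tensor

section Integral

variable {𝕜 E : Type*} [RCLike 𝕜] [NormedAddCommGroup E] [InnerProductSpace 𝕜 E]

lemma integral_norm_inner_pow_eq [MeasurableSpace E] {σ : Measure E} {p : ℕ} (hp : p ≠ 0)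
    {δ : ℝ} (hδ : ∀ x : E, ‖x‖ = 1 → ∫ y, ‖inner 𝕜 x y‖ ^ p ∂σ = δ) (z : E) :
    ∫ y, ‖inner 𝕜 y z‖ ^ p ∂σ = δ * ‖z‖ ^ p := by
  rcases eq_or_ne z 0 with rfl | hz
  · simp [zero_pow hp]
  have hscale (y : E) :
      ‖inner 𝕜 y z‖ ^ p = ‖z‖ ^ p * ‖inner 𝕜 ((‖z‖⁻¹ : 𝕜) • z) y‖ ^ p := by
    rw [inner_smul_left, norm_mul, RCLike.norm_conj, norm_inv, RCLike.norm_ofReal, abs_norm,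
      norm_inner_symm, mul_pow, ← mul_assoc, ← mul_pow, mul_inv_cancel₀ (norm_ne_zero_iff.2 hz),
      one_pow, one_mul]
  simp_rw [hscale, integral_const_mul, hδ _ (norm_smul_inv_norm hz), mul_comm]

lemma norm_inner_rpow_smul_pow {c : ℝ} (hc : 0 ≤ c) {p : ℕ} (hp : p ≠ 0) (u z : E) :
    ‖inner 𝕜 (((c ^ ((p : ℝ)⁻¹) : ℝ) : 𝕜) • u) z‖ ^ p = c * ‖inner 𝕜 u z‖ ^ p := by
  rw [inner_smul_left, RCLike.conj_ofReal, norm_mul, RCLike.norm_ofReal,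
    abs_of_nonneg (by positivity), mul_pow, Real.rpow_inv_natCast_pow hc hp]

end Integral

section Sphere

variable {𝕜 : Type} [RCLike 𝕜] {n k : ℕ} [MeasurableSpace (EuclideanSpace 𝕜 (Fin n))]
  [OpensMeasurableSpace (EuclideanSpace 𝕜 (Fin n))] {σ : Measure (EuclideanSpace 𝕜 (Fin n))}
  [IsFiniteMeasure σ]

lemma integrable_conj_tensPow_mul (hσ : ∀ᵐ y ∂σ, ‖y‖ ≤ 1) (f : Fin k → Fin n × Fin n)
    (c : 𝕜) : Integrable (fun y => starRingEnd 𝕜 (tensPow n k y f) * c) σ := by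
  refine Integrable.mono' (integrable_const ‖c‖) ((RCLike.continuous_conj.comp
    (continuous_tensPow f)).mul continuous_const).aestronglyMeasurable ?_
  filter_upwards [hσ] with y hy
  rw [norm_mul, RCLike.norm_conj]
  exact mul_le_of_le_one_left (norm_nonneg c)
    ((norm_tensPow_le y f).trans (pow_le_one₀ (norm_nonneg y) hy))

lemma tensInner_integral_tensPow_left (hσ : ∀ᵐ y ∂σ, ‖y‖ ≤ 1)
    (z : EuclideanSpace 𝕜 (Fin n)) :
    tensInner n k (fun f => ∫ y, tensPow n k y f ∂σ) (tensPow n k z) =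
      ((∫ y, ‖inner 𝕜 y z‖ ^ (2 * k) ∂σ : ℝ) : 𝕜) := by
  calc tensInner n k (fun f => ∫ y, tensPow n k y f ∂σ) (tensPow n k z)
      = ∑ f, ∫ y, starRingEnd 𝕜 (tensPow n k y f) * tensPow n k z f ∂σ := by
        simp only [tensInner, ← integral_conj, integral_mul_const]
    _ = ∫ y, tensInner n k (tensPow n k y) (tensPow n k z) ∂σ :=
        (integral_finsetSum _ fun f _ => integrable_conj_tensPow_mul hσ f _).symm
    _ = _ := by simp only [tensInner_tensPow, integral_ofReal]

end Sphere

theorem stmt15_general {𝕜 : Type} [RCLike 𝕜] (n k N : ℕ) (hk : 1 ≤ k)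
    [MeasurableSpace (EuclideanSpace 𝕜 (Fin n))] [BorelSpace (EuclideanSpace 𝕜 (Fin n))]
    (σ : Measure (EuclideanSpace 𝕜 (Fin n))) [IsProbabilityMeasure σ]
    (hσ : ∀ᵐ y ∂σ, ‖y‖ = 1) (δ : ℝ) (hδpos : 0 < δ)
    (hδ : ∀ x : EuclideanSpace 𝕜 (Fin n), ‖x‖ = 1 →
      ∫ y, ‖(inner 𝕜 x y : 𝕜)‖ ^ (2 * k) ∂σ = δ)
    (D : (Fin k → Fin n × Fin n) → 𝕜)
    (hD : ∀ f, D f = ∫ y, tensPow n k y f ∂σ)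
    (x : Fin N → EuclideanSpace 𝕜 (Fin n))
    (τ : Fin N → ℝ) (hτ : ∀ i, 0 ≤ τ i)
    (ε : ℝ) (hε : 0 ≤ ε)
    (happrox : RCLike.re (tensInner n k
        (fun f => (∑ i, (τ i : 𝕜) * tensPow n k (x i) f) - D f)
        (fun f => (∑ i, (τ i : 𝕜) * tensPow n k (x i) f) - D f)) ≤ ε ^ 2)
    (a : Fin N → EuclideanSpace 𝕜 (Fin n))
    (ha : ∀ i, a i = (((τ i / δ) ^ ((1 : ℝ) / (2 * k)) : ℝ) : 𝕜) • x i) :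
    ∀ z : EuclideanSpace 𝕜 (Fin n),
      (1 - ε / δ) * ‖z‖ ^ (2 * k) ≤ ∑ i, ‖(inner 𝕜 (a i) z : 𝕜)‖ ^ (2 * k) ∧
      ∑ i, ‖(inner 𝕜 (a i) z : 𝕜)‖ ^ (2 * k) ≤ (1 + ε / δ) * ‖z‖ ^ (2 * k) := by
  intro z
  have hk0 : 2 * k ≠ 0 := by omega
  set S := ∑ i, τ i * ‖inner 𝕜 (x i) z‖ ^ (2 * k) with hS
  set c := ‖z‖ ^ (2 * k) with hc
  have hrows : ∑ i, ‖inner 𝕜 (a i) z‖ ^ (2 * k) = S / δ := by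
    have hexp : (1 : ℝ) / (2 * k) = ((2 * k : ℕ) : ℝ)⁻¹ := by push_cast; rw [one_div]
    simp only [ha, hexp, norm_inner_rpow_smul_pow (div_nonneg (hτ _) hδpos.le) hk0, hS, sum_div]
    exact sum_congr rfl fun i _ => by ring
  have hpair : tensInner n k (fun f => ∑ i, (τ i : 𝕜) * tensPow n k (x i) f - D f)
      (tensPow n k z) = ((S - δ * c : ℝ) : 𝕜) := by
    rw [tensInner_sub_left, tensInner_sum_smul_tensPow_left, funext hD,
      tensInner_integral_tensPow_left (hσ.mono fun y hy => hy.le),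
      integral_norm_inner_pow_eq hk0 hδ]
    simp only [hS, hc]
    push_cast
    ring
  have hdev : |S - δ * c| ≤ ε * c := by
    rw [← RCLike.norm_ofReal (K := 𝕜), ← hpair]
    exact norm_tensInner_tensPow_le hε happrox z
  obtain ⟨hlo, hhi⟩ := abs_le.mp hdev
  rw [hrows, le_div_iff₀ hδpos, div_le_iff₀ hδpos]
  constructor
  · linarith [show (1 - ε / δ) * c * δ = δ * c - ε * c by field_simp]
  · linarith [show (1 + ε / δ) * c * δ = δ * c + ε * c by field_simp]

/-- If `‖∑ᵢ τᵢ ⊗^k(xᵢ ⊗ x̄ᵢ) − D‖₂ ≤ ε`, then the matrix with rows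
`aᵢ* = ((τᵢ/δ)^{1/(2k)} xᵢ)*` is an almost isometric `ℓ₂ → ℓ_{2k}` embedding:
`(1 − ε/δ)‖x‖^{2k} ≤ ∑ᵢ |⟨aᵢ,x⟩|^{2k} ≤ (1 + ε/δ)‖x‖^{2k}`. -/
theorem stmt15 {𝕜 : Type} [RCLike 𝕜] (n k N : ℕ) (hk : 1 ≤ k)
    [MeasurableSpace (EuclideanSpace 𝕜 (Fin n))] [BorelSpace (EuclideanSpace 𝕜 (Fin n))]
    (σ : Measure (EuclideanSpace 𝕜 (Fin n))) [IsProbabilityMeasure σ]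
    (hσ : ∀ᵐ y ∂σ, ‖y‖ = 1) (δ : ℝ) (hδpos : 0 < δ)
    (hδ : ∀ x : EuclideanSpace 𝕜 (Fin n), ‖x‖ = 1 →
      ∫ y, ‖(inner 𝕜 x y : 𝕜)‖ ^ (2 * k) ∂σ = δ)
    (D : (Fin k → Fin n × Fin n) → 𝕜)
    (hD : ∀ f, D f = ∫ y, tensPow n k y f ∂σ)
    (x : Fin N → EuclideanSpace 𝕜 (Fin n)) (hx : ∀ i, ‖x i‖ = 1)
    (τ : Fin N → ℝ) (hτ : ∀ i, 0 ≤ τ i) (hτ1 : ∑ i, τ i = 1)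
    (ε : ℝ) (hε : 0 ≤ ε)
    (happrox : RCLike.re (tensInner n k
        (fun f => (∑ i, (τ i : 𝕜) * tensPow n k (x i) f) - D f)
        (fun f => (∑ i, (τ i : 𝕜) * tensPow n k (x i) f) - D f)) ≤ ε ^ 2)
    (a : Fin N → EuclideanSpace 𝕜 (Fin n))
    (ha : ∀ i, a i = (((τ i / δ) ^ ((1 : ℝ) / (2 * k)) : ℝ) : 𝕜) • x i) :
    ∀ z : EuclideanSpace 𝕜 (Fin n),
      (1 - ε / δ) * ‖z‖ ^ (2 * k) ≤ ∑ i, ‖(inner 𝕜 (a i) z : 𝕜)‖ ^ (2 * k) ∧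
      ∑ i, ‖(inner 𝕜 (a i) z : 𝕜)‖ ^ (2 * k) ≤ (1 + ε / δ) * ‖z‖ ^ (2 * k) :=
  stmt15_general n k N hk σ hσ δ hδpos hδ D hD x τ hτ ε hε happrox a ha
end

section
/- Let ε ∈ [0, 1/2] and suppose A ∈ K^{N×n} with rows a_1^*, ..., a_N^* (all a_i ≠ 0) satisfies (1−ε) ||x||_2^{2k} ≤ ∑_{i=1}^N |⟨a_i, x⟩|^{2k} ≤ (1+ε) ||x||_2^{2k} for all x ∈ K^n. Set x_i = a_i/||a_i||_2, S = ∑_i ||a_i||_2^{2k}, and τ_i = ||a_i||_2^{2k}/S. Then ∑_{i,j=1}^N τ_i τ_j |⟨x_i, x_j⟩|^{2k} ≤ (1 + 4ε) δ, where δ = ∫_S |⟨x,y⟩|^{2k} dσ(y) for the rotation-invariant probability measure σ on the unit sphere of l_2^n(K). -/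
/-!
Integrating the lower frame bound `(1 - ε) ≤ ∑ᵢ |⟨aᵢ, y⟩|^{2k}` over the unit sphere gives
`1 - ε ≤ S δ`, since each `|⟨aᵢ, y⟩|^{2k} = ‖aᵢ‖^{2k} |⟨xᵢ, y⟩|^{2k}` integrates to `‖aᵢ‖^{2k} δ`.
Testing the upper frame bound at `y = xⱼ` and averaging over `j` with weights `τⱼ` gives
`∑ᵢⱼ τᵢ τⱼ |⟨xᵢ, xⱼ⟩|^{2k} ≤ (1 + ε) / S`, and `(1 + ε) ≤ (1 + 4ε)(1 - ε)` for `ε ∈ [0, 1/2]`.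
-/

open MeasureTheory Finset

section

variable {𝕜 E : Type*} [RCLike 𝕜] [NormedAddCommGroup E] [InnerProductSpace 𝕜 E]

lemma integrable_norm_inner_pow [MeasurableSpace E] [OpensMeasurableSpace E] {σ : Measure E}
    [IsFiniteMeasure σ] {R : ℝ} (hσ : ∀ᵐ y ∂σ, ‖y‖ ≤ R) (x : E) (m : ℕ) :
    Integrable (fun y => ‖(inner 𝕜 x y : 𝕜)‖ ^ m) σ := by
  refine (integrable_const ((‖x‖ * R) ^ m)).mono'
    ((innerSL 𝕜 x).continuous.norm.pow m).aestronglyMeasurable ?_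
  filter_upwards [hσ] with y hy
  rw [Real.norm_eq_abs, abs_pow, abs_norm]
  exact pow_le_pow_left₀ (norm_nonneg _) ((norm_inner_le_norm _ _).trans (by gcongr)) m

variable [NormedSpace ℝ E] [IsScalarTower ℝ 𝕜 E]

lemma norm_inv_norm_smul_self {a : E} (ha : a ≠ 0) : ‖‖a‖⁻¹ • a‖ = 1 := by
  rw [norm_smul, norm_inv, norm_norm, inv_mul_cancel₀ (norm_ne_zero_iff.2 ha)]

lemma norm_inner_eq_norm_mul_norm_inner_inv_norm_smul (a y : E) :
    ‖(inner 𝕜 a y : 𝕜)‖ = ‖a‖ * ‖(inner 𝕜 (‖a‖⁻¹ • a) y : 𝕜)‖ := by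
  rcases eq_or_ne a 0 with rfl | ha
  · simp
  · rw [RCLike.real_smul_eq_coe_smul (K := 𝕜), inner_smul_left, norm_mul, RCLike.norm_conj,
      RCLike.norm_ofReal, abs_inv, abs_norm, mul_inv_cancel_left₀ (norm_ne_zero_iff.2 ha)]

lemma sum_sum_weighted_norm_inner_pow_le {ι : Type*} [Fintype ι] {a : ι → E}
    (ha : ∀ i, a i ≠ 0) (m : ℕ) {C : ℝ}
    (hup : ∀ z : E, ‖z‖ = 1 → ∑ i, ‖(inner 𝕜 (a i) z : 𝕜)‖ ^ m ≤ C)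
    {S : ℝ} (hS : S = ∑ i, ‖a i‖ ^ m) :
    ∑ i, ∑ j, ‖a i‖ ^ m / S * (‖a j‖ ^ m / S) *
      ‖(inner 𝕜 (‖a i‖⁻¹ • a i) (‖a j‖⁻¹ • a j) : 𝕜)‖ ^ m ≤ C / S := by
  have hS0 : 0 ≤ S := hS ▸ by positivity
  have hrow (z : E) (hz : ‖z‖ = 1) :
      ∑ i, ‖a i‖ ^ m / S * ‖(inner 𝕜 (‖a i‖⁻¹ • a i) z : 𝕜)‖ ^ m ≤ C / S := by
    calc ∑ i, ‖a i‖ ^ m / S * ‖(inner 𝕜 (‖a i‖⁻¹ • a i) z : 𝕜)‖ ^ m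
        = (∑ i, ‖(inner 𝕜 (a i) z : 𝕜)‖ ^ m) / S := by
          rw [sum_div]
          refine sum_congr rfl fun i _ => ?_
          rw [norm_inner_eq_norm_mul_norm_inner_inv_norm_smul (a i), mul_pow]
          ring
      _ ≤ C / S := div_le_div_of_nonneg_right (hup z hz) hS0
  calc ∑ i, ∑ j, ‖a i‖ ^ m / S * (‖a j‖ ^ m / S) *
        ‖(inner 𝕜 (‖a i‖⁻¹ • a i) (‖a j‖⁻¹ • a j) : 𝕜)‖ ^ m
      = ∑ j, ‖a j‖ ^ m / S *
          ∑ i, ‖a i‖ ^ m / S * ‖(inner 𝕜 (‖a i‖⁻¹ • a i) (‖a j‖⁻¹ • a j) : 𝕜)‖ ^ m := by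
        rw [sum_comm]
        refine sum_congr rfl fun j _ => ?_
        rw [mul_sum]
        exact sum_congr rfl fun i _ => by ring
    _ ≤ ∑ j, ‖a j‖ ^ m / S * (C / S) :=
        sum_le_sum fun j _ => mul_le_mul_of_nonneg_left
          (hrow _ (norm_inv_norm_smul_self (ha j))) (by positivity)
    _ = C / S := by
        rw [← sum_mul, ← sum_div, ← hS]
        rcases eq_or_ne S 0 with h | h
        · simp [h]
        · rw [div_self h, one_mul]

variable [MeasurableSpace E] {σ : Measure E} {m : ℕ}

lemma integral_norm_inner_pow_of_ne_zero {δ : ℝ}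
    (hδ : ∀ x : E, ‖x‖ = 1 → ∫ y, ‖(inner 𝕜 x y : 𝕜)‖ ^ m ∂σ = δ) {a : E} (ha : a ≠ 0) :
    ∫ y, ‖(inner 𝕜 a y : 𝕜)‖ ^ m ∂σ = ‖a‖ ^ m * δ := by
  calc ∫ y, ‖(inner 𝕜 a y : 𝕜)‖ ^ m ∂σ
      = ∫ y, ‖a‖ ^ m * ‖(inner 𝕜 (‖a‖⁻¹ • a) y : 𝕜)‖ ^ m ∂σ := by
        congr 1 with y
        rw [norm_inner_eq_norm_mul_norm_inner_inv_norm_smul a, mul_pow]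
    _ = ‖a‖ ^ m * δ := by
        rw [integral_const_mul, hδ _ (norm_inv_norm_smul_self ha)]

lemma le_sum_norm_pow_mul_of_le_sum_norm_inner_pow [OpensMeasurableSpace E]
    [IsProbabilityMeasure σ] (hσ : ∀ᵐ y ∂σ, ‖y‖ = 1) {δ : ℝ}
    (hδ : ∀ x : E, ‖x‖ = 1 → ∫ y, ‖(inner 𝕜 x y : 𝕜)‖ ^ m ∂σ = δ)
    {ι : Type*} [Fintype ι] {a : ι → E} (ha : ∀ i, a i ≠ 0) {c : ℝ}
    (hlow : ∀ z : E, ‖z‖ = 1 → c ≤ ∑ i, ‖(inner 𝕜 (a i) z : 𝕜)‖ ^ m) :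
    c ≤ (∑ i, ‖a i‖ ^ m) * δ := by
  have hint (i : ι) : Integrable (fun y => ‖(inner 𝕜 (a i) y : 𝕜)‖ ^ m) σ :=
    integrable_norm_inner_pow (hσ.mono fun _ hy => hy.le) (a i) m
  calc c = ∫ _, c ∂σ := by simp
    _ ≤ ∫ y, ∑ i, ‖(inner 𝕜 (a i) y : 𝕜)‖ ^ m ∂σ :=
        integral_mono_ae (integrable_const c) (integrable_finsetSum _ fun i _ => hint i)
          (by filter_upwards [hσ] with y hy using hlow y hy)
    _ = (∑ i, ‖a i‖ ^ m) * δ := by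
        rw [integral_finsetSum _ fun i _ => hint i, sum_mul]
        exact sum_congr rfl fun i _ => integral_norm_inner_pow_of_ne_zero hδ (ha i)

end

lemma one_add_le_one_add_four_mul_mul_one_sub {ε : ℝ} (hε : ε ∈ Set.Icc (0 : ℝ) (1 / 2)) :
    1 + ε ≤ (1 + 4 * ε) * (1 - ε) := by
  nlinarith [hε.1, hε.2]

theorem stmt16_general {𝕜 : Type} [RCLike 𝕜] (n k N : ℕ)
    [MeasurableSpace (EuclideanSpace 𝕜 (Fin n))] [BorelSpace (EuclideanSpace 𝕜 (Fin n))]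
    (σ : Measure (EuclideanSpace 𝕜 (Fin n))) [IsProbabilityMeasure σ]
    (hσ : ∀ᵐ y ∂σ, ‖y‖ = 1) (δ : ℝ)
    (hδ : ∀ x : EuclideanSpace 𝕜 (Fin n), ‖x‖ = 1 →
      ∫ y, ‖(inner 𝕜 x y : 𝕜)‖ ^ (2 * k) ∂σ = δ)
    (ε : ℝ) (hε : ε ∈ Set.Icc (0 : ℝ) (1 / 2))
    (a : Fin N → EuclideanSpace 𝕜 (Fin n)) (ha : ∀ i, a i ≠ 0)
    (hiso : ∀ z : EuclideanSpace 𝕜 (Fin n),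
      (1 - ε) * ‖z‖ ^ (2 * k) ≤ ∑ i, ‖(inner 𝕜 (a i) z : 𝕜)‖ ^ (2 * k) ∧
      ∑ i, ‖(inner 𝕜 (a i) z : 𝕜)‖ ^ (2 * k) ≤ (1 + ε) * ‖z‖ ^ (2 * k))
    (x : Fin N → EuclideanSpace 𝕜 (Fin n)) (hx : ∀ i, x i = ‖a i‖⁻¹ • a i)
    (S : ℝ) (hS : S = ∑ i, ‖a i‖ ^ (2 * k))
    (τ : Fin N → ℝ) (hτ : ∀ i, τ i = ‖a i‖ ^ (2 * k) / S) :
    ∑ i, ∑ j, τ i * τ j * ‖(inner 𝕜 (x i) (x j) : 𝕜)‖ ^ (2 * k) ≤ (1 + 4 * ε) * δ := by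
  obtain rfl : x = fun i => ‖a i‖⁻¹ • a i := funext hx
  obtain rfl : τ = fun i => ‖a i‖ ^ (2 * k) / S := funext hτ
  have hSδ : 1 - ε ≤ S * δ := hS ▸ le_sum_norm_pow_mul_of_le_sum_norm_inner_pow hσ hδ ha
    fun z hz => by simpa [hz] using (hiso z).1
  have hSpos : 0 < S := by
    refine (hS ▸ by positivity : 0 ≤ S).lt_of_ne ?_
    rintro rfl
    linarith [hε.2, zero_mul δ]
  calc _ ≤ (1 + ε) / S := sum_sum_weighted_norm_inner_pow_le ha (2 * k)
        (fun z hz => by simpa [hz] using (hiso z).2) hS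
    _ ≤ (1 + 4 * ε) * δ := by
        rw [div_le_iff₀ hSpos]
        calc 1 + ε ≤ (1 + 4 * ε) * (1 - ε) := one_add_le_one_add_four_mul_mul_one_sub hε
          _ ≤ (1 + 4 * ε) * (S * δ) := by gcongr; linarith [hε.1]
          _ = (1 + 4 * ε) * δ * S := by ring

/-- From an almost isometric `ℓ₂ → ℓ_{2k}` embedding with rows `aᵢ*` (accuracy
`ε ∈ [0, 1/2]`), the normalized vectors `xᵢ = aᵢ/‖aᵢ‖` with weights
`τᵢ = ‖aᵢ‖^{2k}/S`, `S = ∑ᵢ ‖aᵢ‖^{2k}`, satisfy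
`∑ᵢⱼ τᵢτⱼ |⟨xᵢ,xⱼ⟩|^{2k} ≤ (1 + 4ε) δ`. -/
theorem stmt16 {𝕜 : Type} [RCLike 𝕜] (n k N : ℕ) (hk : 1 ≤ k)
    [MeasurableSpace (EuclideanSpace 𝕜 (Fin n))] [BorelSpace (EuclideanSpace 𝕜 (Fin n))]
    (σ : Measure (EuclideanSpace 𝕜 (Fin n))) [IsProbabilityMeasure σ]
    (hσ : ∀ᵐ y ∂σ, ‖y‖ = 1) (δ : ℝ)
    (hδ : ∀ x : EuclideanSpace 𝕜 (Fin n), ‖x‖ = 1 →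
      ∫ y, ‖(inner 𝕜 x y : 𝕜)‖ ^ (2 * k) ∂σ = δ)
    (ε : ℝ) (hε : ε ∈ Set.Icc (0 : ℝ) (1 / 2))
    (a : Fin N → EuclideanSpace 𝕜 (Fin n)) (ha : ∀ i, a i ≠ 0)
    (hiso : ∀ z : EuclideanSpace 𝕜 (Fin n),
      (1 - ε) * ‖z‖ ^ (2 * k) ≤ ∑ i, ‖(inner 𝕜 (a i) z : 𝕜)‖ ^ (2 * k) ∧
      ∑ i, ‖(inner 𝕜 (a i) z : 𝕜)‖ ^ (2 * k) ≤ (1 + ε) * ‖z‖ ^ (2 * k))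
    (x : Fin N → EuclideanSpace 𝕜 (Fin n)) (hx : ∀ i, x i = ‖a i‖⁻¹ • a i)
    (S : ℝ) (hS : S = ∑ i, ‖a i‖ ^ (2 * k))
    (τ : Fin N → ℝ) (hτ : ∀ i, τ i = ‖a i‖ ^ (2 * k) / S) :
    ∑ i, ∑ j, τ i * τ j * ‖(inner 𝕜 (x i) (x j) : 𝕜)‖ ^ (2 * k) ≤ (1 + 4 * ε) * δ :=
  stmt16_general n k N σ hσ δ hδ ε hε a ha hiso x hx S hS τ hτ
end

section
/- Let A ∈ K^{m×N} have unit l_2-norm columns a_1, ..., a_N with coherence μ(A) = max_{j≠ℓ} |⟨a_j, a_ℓ⟩|. Then the restricted isometry constant satisfies δ_s(A) ≤ (s−1) μ(A); in particular if μ(A) ≤ c/√m and m ≥ C s² with c = √C δ_*, then (1−δ_*)||x||_2^2 ≤ ||Ax||_2^2 ≤ (1+δ_*)||x||_2^2 for all s-sparse x ∈ K^N. -/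
/-!
Writing `G = Aᴴ A` for the Gram matrix, `‖Ax‖² = ⟪x, G x⟫`. Unit columns make the diagonal of
`G` equal to `1`, so `‖Ax‖² - ‖x‖² = ⟪x, (G - 1) x⟫`, a form whose matrix has zero diagonal
and off-diagonal entries bounded by the coherence `μ`. For `x` supported on `s` coordinates this
form is at most `μ ((∑ |xₖ|)² - ∑ |xₖ|²) ≤ μ (s - 1) ‖x‖²` by Cauchy–Schwarz on the support.
The second claim follows since `μ ≤ √C δ⋆ / √m` and `√C s ≤ √m` give `(s - 1) μ ≤ s μ ≤ δ⋆`.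
-/

open Matrix Finset

section SparseQuadraticForm

variable {𝕜 ι κ : Type*} [RCLike 𝕜] [Fintype ι]

theorem sq_sum_le_ncard_support_mul_sum_sq [Fintype κ] (a : κ → ℝ) :
    (∑ k, a k) ^ 2 ≤ {k | a k ≠ 0}.ncard * ∑ k, a k ^ 2 := by
  classical
  have hcard : {k | a k ≠ 0}.ncard = #{k | a k ≠ 0} := by
    rw [← Set.ncard_coe_finset, coe_filter]
    simp only [mem_univ, true_and]
  have hsum : ∑ k, a k = ∑ k with a k ≠ 0, a k := (sum_filter_ne_zero _).symm
  have hsum_sq : ∑ k, a k ^ 2 = ∑ k with a k ≠ 0, a k ^ 2 :=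
    (sum_filter_of_ne fun k _ hk => by simpa using hk).symm
  rw [hcard, hsum, hsum_sq]
  exact sq_sum_le_card_mul_sum_sq

theorem norm_star_dotProduct_mulVec_le_of_diag_eq_zero [Fintype κ] [DecidableEq κ]
    {E : Matrix κ κ 𝕜} {μ : ℝ} (hμ0 : 0 ≤ μ) (hdiag : ∀ k, E k k = 0) (hoff : ∀ k l, k ≠ l → ‖E k l‖ ≤ μ)
    {s : ℕ} (x : κ → 𝕜) (hx : {k | x k ≠ 0}.ncard ≤ s) :
    ‖star x ⬝ᵥ E *ᵥ x‖ ≤ (s - 1) * μ * ∑ k, ‖x k‖ ^ 2 := by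
  have hrow : ∀ k, ∑ l, ‖E k l‖ * ‖x l‖ ≤ μ * (∑ l, ‖x l‖ - ‖x k‖) := fun k => by
    rw [← add_sum_erase _ _ (mem_univ k), hdiag, norm_zero, zero_mul, zero_add,
      ← sum_erase_eq_sub (mem_univ k), mul_sum]
    exact sum_le_sum fun l hl =>
      mul_le_mul_of_nonneg_right (hoff k l (ne_of_mem_erase hl).symm) (norm_nonneg _)
  have hsupp : {k | ‖x k‖ ≠ 0} = {k | x k ≠ 0} := by simp only [ne_eq, norm_eq_zero]
  have hcs := sq_sum_le_ncard_support_mul_sum_sq fun k => ‖x k‖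
  rw [hsupp] at hcs
  calc ‖star x ⬝ᵥ E *ᵥ x‖ = ‖∑ k, star (x k) * ∑ l, E k l * x l‖ := rfl
    _ ≤ ∑ k, ‖x k‖ * ∑ l, ‖E k l‖ * ‖x l‖ := by
      refine (norm_sum_le _ _).trans (sum_le_sum fun k _ => ?_)
      rw [norm_mul, norm_star]
      gcongr
      exact (norm_sum_le _ _).trans_eq (by simp only [norm_mul])
    _ ≤ ∑ k, ‖x k‖ * (μ * (∑ l, ‖x l‖ - ‖x k‖)) := by gcongr with k; exact hrow k
    _ = μ * ((∑ k, ‖x k‖) ^ 2 - ∑ k, ‖x k‖ ^ 2) := by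
      simp only [mul_left_comm _ μ, ← mul_sum, mul_sub, sum_sub_distrib, ← sum_mul, sq]
    _ ≤ μ * ((s - 1) * ∑ k, ‖x k‖ ^ 2) := by
      gcongr
      have hs : ({k | x k ≠ 0}.ncard : ℝ) ≤ s := by exact_mod_cast hx
      have := mul_le_mul_of_nonneg_right hs (sum_nonneg fun k (_ : k ∈ univ) => sq_nonneg ‖x k‖)
      linarith
    _ = (s - 1) * μ * ∑ k, ‖x k‖ ^ 2 := by ring

theorem sum_norm_sq_eq_re_star_dotProduct (v : ι → 𝕜) :
    ∑ i, ‖v i‖ ^ 2 = RCLike.re (star v ⬝ᵥ v) := by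
  simp only [dotProduct, Pi.star_apply, RCLike.star_def, RCLike.conj_mul, map_sum,
    ← RCLike.ofReal_pow, RCLike.ofReal_re]

theorem sum_norm_mulVec_sq_eq_re_gram [Fintype κ] (A : Matrix ι κ 𝕜) (x : κ → 𝕜) :
    ∑ i, ‖(A *ᵥ x) i‖ ^ 2 = RCLike.re (star x ⬝ᵥ (Aᴴ * A) *ᵥ x) := by
  rw [sum_norm_sq_eq_re_star_dotProduct, star_mulVec, ← mulVec_mulVec,
    dotProduct_mulVec (star x) Aᴴ]

theorem conjTranspose_mul_self_apply_self {A : Matrix ι κ 𝕜}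
    (hcol : ∀ k, ∑ i, ‖A i k‖ ^ 2 = 1) (k : κ) : (Aᴴ * A) k k = 1 := by
  simp only [mul_apply, conjTranspose_apply, RCLike.star_def, RCLike.conj_mul,
    ← RCLike.ofReal_pow, ← RCLike.ofReal_sum, hcol, RCLike.ofReal_one]

theorem abs_sum_norm_mulVec_sq_sub_le [Fintype κ] {A : Matrix ι κ 𝕜}
    (hcol : ∀ k, ∑ i, ‖A i k‖ ^ 2 = 1) {μ : ℝ} (hμ0 : 0 ≤ μ) (hμ : ∀ k l, k ≠ l → ‖(Aᴴ * A) k l‖ ≤ μ)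
    {s : ℕ} (x : κ → 𝕜) (hx : {k | x k ≠ 0}.ncard ≤ s) :
    |∑ i, ‖(A *ᵥ x) i‖ ^ 2 - ∑ k, ‖x k‖ ^ 2| ≤ (s - 1) * μ * ∑ k, ‖x k‖ ^ 2 := by
  classical
  have hdiag : ∀ k, (Aᴴ * A - 1 : Matrix κ κ 𝕜) k k = 0 := fun k => by
    rw [Matrix.sub_apply, conjTranspose_mul_self_apply_self hcol, one_apply_eq, sub_self]
  have hoff : ∀ k l, k ≠ l → ‖(Aᴴ * A - 1 : Matrix κ κ 𝕜) k l‖ ≤ μ := fun k l hkl => by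
    rw [Matrix.sub_apply, one_apply_ne hkl, sub_zero]
    exact hμ k l hkl
  have hform : ∑ i, ‖(A *ᵥ x) i‖ ^ 2 - ∑ k, ‖x k‖ ^ 2
      = RCLike.re (star x ⬝ᵥ (Aᴴ * A - 1 : Matrix κ κ 𝕜) *ᵥ x) := by
    rw [sum_norm_mulVec_sq_eq_re_gram, sum_norm_sq_eq_re_star_dotProduct, sub_mulVec,
      one_mulVec, dotProduct_sub, map_sub]
  rw [hform]
  exact (RCLike.abs_re_le_norm _).trans
    (norm_star_dotProduct_mulVec_le_of_diag_eq_zero hμ0 hdiag hoff x hx)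

end SparseQuadraticForm

theorem sub_one_mul_le_of_le_div_sqrt {C δ μ : ℝ} {m s : ℕ} (hC : 0 < C) (hδ : 0 < δ)
    (hμ0 : 0 ≤ μ) (hμ : μ ≤ Real.sqrt C * δ / Real.sqrt m) (hm : C * s ^ 2 ≤ m) :
    ((s : ℝ) - 1) * μ ≤ δ := by
  have hsqrtC : 0 < Real.sqrt C := Real.sqrt_pos.mpr hC
  have hs : Real.sqrt C * s ≤ Real.sqrt m := by
    rw [← Real.sqrt_sq (Nat.cast_nonneg s), ← Real.sqrt_mul hC.le]
    exact Real.sqrt_le_sqrt hm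
  have hμm : μ * Real.sqrt m ≤ Real.sqrt C * δ := by
    rcases (Real.sqrt_nonneg (m : ℝ)).eq_or_lt with hm0 | hm0
    · rw [← hm0, mul_zero]; positivity
    · rwa [← le_div_iff₀ hm0]
  have hsμ : s * μ ≤ δ := by
    refine le_of_mul_le_mul_left ?_ hsqrtC
    calc Real.sqrt C * (s * μ) = Real.sqrt C * s * μ := (mul_assoc _ _ _).symm
      _ ≤ Real.sqrt m * μ := mul_le_mul_of_nonneg_right hs hμ0
      _ ≤ Real.sqrt C * δ := by rwa [mul_comm]
  linarith

/-- Coherence bound on the restricted isometry constant: for a matrix with unit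
`ℓ₂`-norm columns and coherence at most `μ`, one has `δ_s(A) ≤ (s-1)μ`; in
particular if `μ ≤ c/√m` with `c = √C δ⋆` and `m ≥ C s²`, then
`(1-δ⋆)‖x‖₂² ≤ ‖Ax‖₂² ≤ (1+δ⋆)‖x‖₂²` for all `s`-sparse `x`. -/
theorem stmt18 (𝕜 : Type) [RCLike 𝕜] (m N s : ℕ)
    (A : Matrix (Fin m) (Fin N) 𝕜)
    (hcol : ∀ k, ∑ j, ‖A j k‖ ^ 2 = 1)
    (μ : ℝ) (hμ0 : 0 ≤ μ)
    (hμ : ∀ k l : Fin N, k ≠ l → ‖∑ j, (starRingEnd 𝕜) (A j k) * A j l‖ ≤ μ) :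
    (∀ x : Fin N → 𝕜, {k | x k ≠ 0}.ncard ≤ s →
      (1 - ((s : ℝ) - 1) * μ) * ∑ k, ‖x k‖ ^ 2 ≤ ∑ j, ‖A.mulVec x j‖ ^ 2 ∧
      ∑ j, ‖A.mulVec x j‖ ^ 2 ≤ (1 + ((s : ℝ) - 1) * μ) * ∑ k, ‖x k‖ ^ 2) ∧
    (∀ C c δstar : ℝ, 0 < C → 0 < δstar → c = Real.sqrt C * δstar →
      μ ≤ c / Real.sqrt m → (m : ℝ) ≥ C * s ^ 2 →
      ∀ x : Fin N → 𝕜, {k | x k ≠ 0}.ncard ≤ s →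
        (1 - δstar) * ∑ k, ‖x k‖ ^ 2 ≤ ∑ j, ‖A.mulVec x j‖ ^ 2 ∧
        ∑ j, ‖A.mulVec x j‖ ^ 2 ≤ (1 + δstar) * ∑ k, ‖x k‖ ^ 2) := by
  have hgram : ∀ k l, k ≠ l → ‖(Aᴴ * A) k l‖ ≤ μ := hμ
  have hrip := fun x hx => abs_le.mp (abs_sum_norm_mulVec_sq_sub_le hcol hμ0 hgram (s := s) x hx)
  refine ⟨fun x hx => ?_, fun C c δstar hC hδ hc hμc hm x hx => ?_⟩
  · have := hrip x hx
    constructor <;> linarith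
  · have hδμ := mul_le_mul_of_nonneg_right
      (sub_one_mul_le_of_le_div_sqrt hC hδ hμ0 (hc ▸ hμc) hm)
      (sum_nonneg fun k (_ : k ∈ univ) => sq_nonneg ‖x k‖)
    have := hrip x hx
    constructor <;> linarith
end
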